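/- arXiv:1705.06928 — 10 statements merged into one kernel-verified Lean document; each statement's English description precedes it below -/
import Mathlib

section
/- For every bisection (B, W) of a cubic graph G into two equal-size colour classes such that every monochromatic component has at most 2 vertices (a 2-bisection), the number of isolated vertices in the subgraph induced by B equals the number of isolated vertices in the subgraph induced by W, and likewise for the number of isolated edges; consequently the two induced monochromatic subgraphs are isomorphic. -/
open SimpleGraph

/-- Every connected component of the subgraph of `G` induced on `s` has at most `k` vertices. -/
def SmallComponents {V : Type*} (G : SimpleGraph V) (s : Set V) (k : ℕ) : Prop :=
  ∀ c : (G.induce s).ConnectedComponent, c.supp.ncard ≤ k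

/-- A `k`-bisection: the two colour classes `B` and `Bᶜ` have the same cardinality and
every monochromatic component has at most `k` vertices. -/
def IsKBisection {V : Type*} [Fintype V] (G : SimpleGraph V) (k : ℕ) (B : Set V) : Prop :=
  2 * B.ncard = Fintype.card V ∧ SmallComponents G B k ∧ SmallComponents G Bᶜ k

/-- A linear forest: an acyclic graph with all degrees at most 2,
i.e. every connected component is a path. -/
def IsLinearForest {V : Type*} (G : SimpleGraph V) : Prop :=
  G.IsAcyclic ∧ ∀ v : V, (G.neighborSet v).ncard ≤ 2

/-!
In a 2-bisection every vertex has at most one neighbour of its own colour, so each colour class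
induces a matching together with isolated vertices. In a `d`-regular graph, counting the
bichromatic edges from both sides gives `d|B| - 2m(B) = d|W| - 2m(W)`, so the two matchings have
the same size and, as `|B| = |W|`, so have the sets of isolated vertices. A graph of maximum degree
one is encoded by the involution exchanging the ends of each matching edge; involutions with
equally many moved points have the same cycle type, hence are conjugate, and a conjugating
bijection is a graph isomorphism.
-/

open Finset

theorem Finset.sum_card_eq_card_filter_nonempty {ι β : Type*} (t : Finset ι) (f : ι → Finset β)
    (h : ∀ i ∈ t, #(f i) ≤ 1) : ∑ i ∈ t, #(f i) = #{i ∈ t | (f i).Nonempty} := by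
  rw [card_filter]
  refine sum_congr rfl fun i hi => ?_
  split_ifs with hne
  · exact le_antisymm (h i hi) hne.card_pos
  · simpa [not_nonempty_iff_eq_empty] using hne

theorem Equiv.Perm.isConj_of_sq_eq_one {α : Type*} [Fintype α] [DecidableEq α]
    {σ τ : Equiv.Perm α} (hσ : σ ^ 2 = 1) (hτ : τ ^ 2 = 1) (h : #σ.support = #τ.support) :
    IsConj σ τ := by
  have hσ' := σ.sum_cycleType
  have hτ' := τ.sum_cycleType
  rw [Equiv.Perm.cycleType_of_pow_prime_eq_one hσ, Multiset.sum_replicate, smul_eq_mul] at hσ'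
  rw [Equiv.Perm.cycleType_of_pow_prime_eq_one hτ, Multiset.sum_replicate, smul_eq_mul] at hτ'
  rw [Equiv.Perm.isConj_iff_cycleType_eq, Equiv.Perm.cycleType_of_pow_prime_eq_one hσ,
    Equiv.Perm.cycleType_of_pow_prime_eq_one hτ]
  congr 1
  omega

theorem Equiv.Perm.exists_equiv_comm_of_sq_eq_one {α β : Type*} [Fintype α] [DecidableEq α]
    [Fintype β] [DecidableEq β] {p : Equiv.Perm α} {q : Equiv.Perm β} (hp : p ^ 2 = 1)
    (hq : q ^ 2 = 1) (hcard : Fintype.card α = Fintype.card β) (h : #p.support = #q.support) :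
    ∃ φ : α ≃ β, ∀ x, φ (p x) = q (φ x) := by
  let e := Fintype.equivOfCardEq hcard
  let q' : Equiv.Perm α := e.symm.permCongr q
  have hq' : q' ^ 2 = 1 := by
    ext x
    simpa [q', sq, Equiv.permCongr_apply, Equiv.symm_apply_eq] using congr($hq (e x))
  have hsupp : #q'.support = #q.support :=
    Finset.card_equiv e fun x => by simp [q', Equiv.permCongr_apply, Equiv.symm_apply_eq]
  obtain ⟨c, hc⟩ := isConj_iff.mp (isConj_of_sq_eq_one hp hq' (h.trans hsupp.symm))
  refine ⟨c.trans e, fun x => ?_⟩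
  simpa [q', Equiv.permCongr_apply, mul_assoc] using congr(e ($hc (c x)))

namespace SimpleGraph

variable {α β V : Type*}

-- `Finite α` matters: an infinite component has `ncard = 0` and would slip through `hH`.
theorem adj_unique_of_forall_ncard_supp_le_two [Finite α] {H : SimpleGraph α}
    (hH : ∀ c : H.ConnectedComponent, c.supp.ncard ≤ 2) {a b c : α}
    (hab : H.Adj a b) (hac : H.Adj a c) : b = c := by
  by_contra hbc
  have hsub : {a, b, c} ⊆ (H.connectedComponentMk a).supp := by
    rintro x (rfl | rfl | rfl)
    · rfl
    · exact ConnectedComponent.sound hab.reachable.symm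
    · exact ConnectedComponent.sound hac.reachable.symm
  have h3 : ({a, b, c} : Set α).ncard = 3 :=
    Set.ncard_eq_three.mpr ⟨a, b, c, hab.ne, hac.ne, hbc, rfl⟩
  have := Set.ncard_le_ncard hsub
  have := hH (H.connectedComponentMk a)
  omega

open Classical in
noncomputable def partner (H : SimpleGraph α) (a : α) : α :=
  if h : ∃ b, H.Adj a b then h.choose else a

section Partner

variable {H : SimpleGraph α} {a b : α}

theorem partner_eq_of_adj (hH : ∀ ⦃a b c⦄, H.Adj a b → H.Adj a c → b = c) (hab : H.Adj a b) :
    H.partner a = b := by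
  have h : ∃ b, H.Adj a b := ⟨b, hab⟩
  rw [partner, dif_pos h]
  exact hH h.choose_spec hab

theorem partner_eq_self (h : ¬ ∃ b, H.Adj a b) : H.partner a = a := by
  rw [partner, dif_neg h]

theorem adj_iff_partner_eq (hH : ∀ ⦃a b c⦄, H.Adj a b → H.Adj a c → b = c) :
    H.Adj a b ↔ H.partner a = b ∧ a ≠ b := by
  refine ⟨fun h => ⟨partner_eq_of_adj hH h, h.ne⟩, ?_⟩
  rintro ⟨rfl, hne⟩
  by_cases h : ∃ b, H.Adj a b
  · rw [partner, dif_pos h]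
    exact h.choose_spec
  · exact absurd (partner_eq_self h).symm hne

theorem partner_ne_self_iff (hH : ∀ ⦃a b c⦄, H.Adj a b → H.Adj a c → b = c) :
    H.partner a ≠ a ↔ ∃ b, H.Adj a b := by
  refine ⟨not_imp_comm.mp partner_eq_self, fun ⟨b, hab⟩ => ?_⟩
  rw [partner_eq_of_adj hH hab]
  exact hab.ne.symm

theorem partner_involutive (hH : ∀ ⦃a b c⦄, H.Adj a b → H.Adj a c → b = c) :
    Function.Involutive H.partner := by
  intro a
  by_cases h : ∃ b, H.Adj a b
  · obtain ⟨b, hab⟩ := h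
    rw [partner_eq_of_adj hH hab, partner_eq_of_adj hH hab.symm]
  · rw [partner_eq_self h, partner_eq_self h]

end Partner

theorem nonempty_iso_of_adj_unique [Finite α] [Finite β] {H : SimpleGraph α} {K : SimpleGraph β}
    (hH : ∀ ⦃a b c⦄, H.Adj a b → H.Adj a c → b = c)
    (hK : ∀ ⦃a b c⦄, K.Adj a b → K.Adj a c → b = c) (hcard : Nat.card α = Nat.card β)
    (hmatched : Nat.card {a // ∃ b, H.Adj a b} = Nat.card {a // ∃ b, K.Adj a b}) :
    Nonempty (H ≃g K) := by
  classical
  have := Fintype.ofFinite α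
  have := Fintype.ofFinite β
  let p := (partner_involutive hH).toPerm
  let q := (partner_involutive hK).toPerm
  have hsupp : #p.support = #q.support := by
    simp only [Nat.card_eq_fintype_card, Fintype.card_subtype] at hmatched
    convert hmatched using 2 <;> ext <;>
      simp [p, q, Equiv.Perm.mem_support, partner_ne_self_iff hH, partner_ne_self_iff hK]
  obtain ⟨φ, hφ⟩ := Equiv.Perm.exists_equiv_comm_of_sq_eq_one
    (by ext; simp [p, sq, partner_involutive hH _])
    (by ext; simp [q, sq, partner_involutive hK _])
    (by simpa [Nat.card_eq_fintype_card] using hcard) hsupp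
  refine ⟨⟨φ, fun {a b} => ?_⟩⟩
  have hφ' : φ (H.partner a) = K.partner (φ a) := hφ a
  rw [adj_iff_partner_eq hK, adj_iff_partner_eq hH, ← hφ', φ.injective.eq_iff, φ.injective.ne_iff]

section Bisection

variable {G : SimpleGraph V}

theorem sum_card_filter_adj_eq_of_isRegularOfDegree [Fintype V] [DecidableEq V]
    [DecidableRel G.Adj] {d : ℕ} (hG : G.IsRegularOfDegree d) {s : Finset V} (hs : #s = #sᶜ) :
    ∑ v ∈ s, #{w ∈ s | G.Adj v w} = ∑ v ∈ sᶜ, #{w ∈ sᶜ | G.Adj v w} := by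
  have hsplit (v : V) : #{w ∈ s | G.Adj v w} + #{w ∈ sᶜ | G.Adj v w} = d := by
    rw [← hG v, ← card_neighborFinset_eq_degree,
      ← card_union_of_disjoint (disjoint_filter_filter disjoint_compl_right), ← filter_union,
      union_compl]
    congr 1
    ext
    simp
  have hcross : ∑ v ∈ s, #{w ∈ sᶜ | G.Adj v w} = ∑ v ∈ sᶜ, #{w ∈ s | G.Adj v w} := by
    simpa [bipartiteAbove, bipartiteBelow, G.adj_comm] using
      sum_card_bipartiteAbove_eq_sum_card_bipartiteBelow (s := s) (t := sᶜ) G.Adj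
  have htotal : ∑ v ∈ s, (#{w ∈ s | G.Adj v w} + #{w ∈ sᶜ | G.Adj v w}) =
      ∑ v ∈ sᶜ, (#{w ∈ sᶜ | G.Adj v w} + #{w ∈ s | G.Adj v w}) := by
    simp only [hsplit, add_comm _ #{w ∈ s | G.Adj _ w}, sum_const, hs]
  rw [sum_add_distrib, sum_add_distrib] at htotal
  omega

theorem ncard_sep_exists_adj_eq_sum [DecidableRel G.Adj] (s : Finset V)
    (hs : ∀ ⦃a b c : (s : Set V)⦄, G.Adj a b → G.Adj a c → b = c) :
    {v ∈ (s : Set V) | ∃ w ∈ (s : Set V), G.Adj v w}.ncard = ∑ v ∈ s, #{w ∈ s | G.Adj v w} := by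
  rw [sum_card_eq_card_filter_nonempty, ← Set.ncard_coe_finset]
  · congr 1
    ext
    simp [filter_nonempty_iff]
  · intro v hv
    refine card_le_one.mpr fun b hb c hc => ?_
    rw [mem_filter] at hb hc
    exact congrArg Subtype.val (@hs ⟨v, hv⟩ ⟨b, hb.1⟩ ⟨c, hc.1⟩ hb.2 hc.2)

theorem ncard_sep_exists_adj_eq_of_isRegularOfDegree [Fintype V] [DecidableRel G.Adj] {d : ℕ}
    (hG : G.IsRegularOfDegree d) {s : Set V} (hs : s.ncard = sᶜ.ncard)
    (hsu : ∀ ⦃a b c : s⦄, G.Adj a b → G.Adj a c → b = c)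
    (hsu' : ∀ ⦃a b c : ↥sᶜ⦄, G.Adj a b → G.Adj a c → b = c) :
    {v ∈ s | ∃ w ∈ s, G.Adj v w}.ncard = {v ∈ sᶜ | ∃ w ∈ sᶜ, G.Adj v w}.ncard := by
  classical
  obtain ⟨t, rfl⟩ := s.toFinite.exists_finset_coe
  rw [← coe_compl] at hs hsu' ⊢
  rw [ncard_sep_exists_adj_eq_sum t hsu, ncard_sep_exists_adj_eq_sum tᶜ hsu']
  rw [Set.ncard_coe_finset, Set.ncard_coe_finset] at hs
  exact sum_card_filter_adj_eq_of_isRegularOfDegree hG hs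

theorem ncard_sep_forall_not_adj [Finite V] (s : Set V) :
    {v ∈ s | ∀ w ∈ s, ¬ G.Adj v w}.ncard = s.ncard - {v ∈ s | ∃ w ∈ s, G.Adj v w}.ncard := by
  rw [← Set.ncard_sdiff (fun v hv => hv.1)]
  congr 1
  ext
  simp

theorem natCard_exists_adj_induce_eq_ncard (s : Set V) :
    Nat.card {a // ∃ b, (G.induce s).Adj a b} = {v ∈ s | ∃ w ∈ s, G.Adj v w}.ncard := by
  rw [← Nat.card_coe_set_eq]
  exact Nat.card_congr ((Equiv.subtypeEquivRight fun a => by simp).trans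
    (Equiv.subtypeSubtypeEquivSubtypeInter (· ∈ s) fun v => ∃ w ∈ s, G.Adj v w))

theorem ncard_isolatedEdges_eq_natCard_edgeSet_induce {s : Set V}
    (hs : ∀ ⦃a b c : s⦄, G.Adj a b → G.Adj a c → b = c) :
    {e : Sym2 V | ∃ u v, e = s(u, v) ∧ G.Adj u v ∧ u ∈ s ∧ v ∈ s ∧
        (∀ w ∈ s, G.Adj u w → w = v) ∧ (∀ w ∈ s, G.Adj v w → w = u)}.ncard =
      Nat.card (G.induce s).edgeSet := by
  have himage : {e : Sym2 V | ∃ u v, e = s(u, v) ∧ G.Adj u v ∧ u ∈ s ∧ v ∈ s ∧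
        (∀ w ∈ s, G.Adj u w → w = v) ∧ (∀ w ∈ s, G.Adj v w → w = u)} =
      Sym2.map Subtype.val '' (G.induce s).edgeSet := by
    ext e
    constructor
    · rintro ⟨u, v, rfl, huv, hu, hv, -, -⟩
      exact ⟨s(⟨u, hu⟩, ⟨v, hv⟩), huv, rfl⟩
    · rintro ⟨e, he, rfl⟩
      induction e using Sym2.ind with
      | _ a b =>
        refine ⟨a, b, rfl, he, a.2, b.2, fun w hw haw => ?_, fun w hw hbw => ?_⟩
        · exact congrArg Subtype.val (@hs a ⟨w, hw⟩ b haw he)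
        · exact congrArg Subtype.val (@hs b ⟨w, hw⟩ a hbw he.symm)
  rw [himage, Set.ncard_image_of_injective _ (Sym2.map.injective Subtype.val_injective),
    Nat.card_coe_set_eq]

end Bisection

end SimpleGraph

/-- In every 2-bisection of a cubic graph, the numbers of isolated vertices in the two
induced monochromatic subgraphs agree, the numbers of isolated edges agree, and the two
induced monochromatic subgraphs are isomorphic. -/
theorem stmt0 {V : Type*} [Fintype V] (G : SimpleGraph V) [DecidableRel G.Adj]
    (hcubic : G.IsRegularOfDegree 3) (B : Set V) (hB : IsKBisection G 2 B) :
    {v ∈ B | ∀ w ∈ B, ¬ G.Adj v w}.ncard = {v ∈ Bᶜ | ∀ w ∈ Bᶜ, ¬ G.Adj v w}.ncard ∧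
    {e : Sym2 V | ∃ u v, e = s(u, v) ∧ G.Adj u v ∧ u ∈ B ∧ v ∈ B ∧
        (∀ w ∈ B, G.Adj u w → w = v) ∧ (∀ w ∈ B, G.Adj v w → w = u)}.ncard =
      {e : Sym2 V | ∃ u v, e = s(u, v) ∧ G.Adj u v ∧ u ∈ Bᶜ ∧ v ∈ Bᶜ ∧
        (∀ w ∈ Bᶜ, G.Adj u w → w = v) ∧ (∀ w ∈ Bᶜ, G.Adj v w → w = u)}.ncard ∧
    Nonempty (G.induce B ≃g G.induce Bᶜ) := by
  classical
  obtain ⟨hcard, hB, hW⟩ := hB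
  have hBu : ∀ ⦃a b c : ↥B⦄, G.Adj a b → G.Adj a c → b = c :=
    fun _ _ _ => adj_unique_of_forall_ncard_supp_le_two hB
  have hWu : ∀ ⦃a b c : ↥Bᶜ⦄, G.Adj a b → G.Adj a c → b = c :=
    fun _ _ _ => adj_unique_of_forall_ncard_supp_le_two hW
  have hBW : B.ncard = Bᶜ.ncard := by
    have := Set.ncard_add_ncard_compl B
    rw [Nat.card_eq_fintype_card] at this
    omega
  have hmatched := ncard_sep_exists_adj_eq_of_isRegularOfDegree hcubic hBW hBu hWu
  obtain ⟨φ⟩ : Nonempty (G.induce B ≃g G.induce Bᶜ) :=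
    nonempty_iso_of_adj_unique hBu hWu (by rwa [Nat.card_coe_set_eq, Nat.card_coe_set_eq])
      (by rw [natCard_exists_adj_induce_eq_ncard, natCard_exists_adj_induce_eq_ncard, hmatched])
  refine ⟨?_, ?_, ⟨φ⟩⟩
  · rw [ncard_sep_forall_not_adj, ncard_sep_forall_not_adj, hBW, hmatched]
  · rw [ncard_isolatedEdges_eq_natCard_edgeSet_induce hBu,
      ncard_isolatedEdges_eq_natCard_edgeSet_induce hWu]
    exact Nat.card_congr φ.mapEdgeSet
end

section
/- Every 3-edge-colourable cubic graph admits a 2-bisection. -/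
/-!
Colours `0` and `1` form a 2-factor whose cycles alternate between the two perfect matchings `σ`
and `τ`, hence are even. They are the `τσ`-orbits paired up by `σ`, and `σ` never maps such an orbit
to itself: `σ (τσ)ᵏ` is conjugate to `σ` or to `τ`, so it has no fixed point. Choosing one orbit
from each pair gives a set `B` that both `σ` and `τ` swap with its complement. Then every vertex
has its `σ`- and `τ`-neighbours on the other side, so the monochromatic components are single
vertices or single edges of colour `2`, and `σ` is a bijection between `B` and `Bᶜ`.
-/

open SimpleGraph

open Function Equiv

namespace Equiv.Perm

variable {α : Type*}

lemma conj_mul_eq_inv_of_involutive {σ τ : Perm α} (hσ : Involutive σ) (hτ : Involutive τ) :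
    σ * (τ * σ) * σ⁻¹ = (τ * σ)⁻¹ := by
  simp only [mul_inv_rev, Perm.inv_def, Involutive.symm_eq_self_of_involutive σ hσ,
    Involutive.symm_eq_self_of_involutive τ hτ]
  ext x
  simp [hσ x]

lemma not_sameCycle_mul_apply_self {σ τ : Perm α} (hσ : Involutive σ) (hτ : Involutive τ)
    (hσfix : ∀ x, σ x ≠ x) (hτfix : ∀ x, τ x ≠ x) (x : α) : ¬ (τ * σ).SameCycle x (σ x) := by
  rintro ⟨k, hk⟩
  set T := τ * σ
  have hconj (j : ℤ) (y : α) : σ ((T ^ j) y) = (T ^ (-j)) (σ y) := by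
    rw [zpow_neg, ← inv_zpow, ← conj_mul_eq_inv_of_involutive hσ hτ, conj_zpow,
      Perm.inv_def, Involutive.symm_eq_self_of_involutive σ hσ, Perm.mul_apply, Perm.mul_apply, hσ]
  have hσT (j : ℤ) : σ ((T ^ j) x) = (T ^ (k - j)) x := by
    rw [hconj, ← hk, ← Perm.mul_apply, ← zpow_add, neg_add_eq_sub]
  obtain ⟨j, rfl | rfl⟩ := Int.even_or_odd' k
  · apply hσfix ((T ^ j) x)
    rw [hσT, show 2 * j - j = j by ring]
  · apply hτfix (σ ((T ^ j) x))
    conv_rhs => rw [hσT, show 2 * j + 1 - j = 1 + j by ring, zpow_add, zpow_one]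
    rfl

end Equiv.Perm

lemma Function.Involutive.exists_apply_mem_iff_notMem {α : Type*} {f : α → α}
    (hf : Involutive f) (hfix : ∀ a, f a ≠ a) : ∃ A : Set α, ∀ a, f a ∈ A ↔ a ∉ A := by
  let _ : LinearOrder α := IsWellOrder.linearOrder WellOrderingRel
  refine ⟨{a | a < f a}, fun a => ?_⟩
  show f a < f (f a) ↔ ¬ a < f a
  rw [hf a, not_lt]
  exact (hfix a).le_iff_lt.symm

lemma exists_set_apply_mem_iff_notMem_of_involutive {α : Type*} {f g : α → α}
    (hf : Involutive f) (hg : Involutive g) (hffix : ∀ a, f a ≠ a) (hgfix : ∀ a, g a ≠ a) :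
    ∃ B : Set α, ∀ a, (f a ∈ B ↔ a ∉ B) ∧ (g a ∈ B ↔ a ∉ B) := by
  let σ := hf.toPerm f
  let τ := hg.toPerm g
  let s := Perm.SameCycle.setoid (τ * σ)
  let σq : Quotient s → Quotient s := Quotient.map σ fun a b hab => by
    have := hab.conj (g := σ)
    rwa [Perm.conj_mul_eq_inv_of_involutive hf hg, Perm.sameCycle_inv] at this
  have hσq : Involutive σq := by
    rintro ⟨a⟩
    exact congrArg (Quotient.mk s) (hf a)
  have hσqfix (q : Quotient s) : σq q ≠ q := by
    induction q using Quotient.ind with | _ a => ?_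
    exact fun h => Perm.not_sameCycle_mul_apply_self hf hg hffix hgfix a (Quotient.exact h).symm
  obtain ⟨A, hA⟩ := hσq.exists_apply_mem_iff_notMem hσqfix
  have hgf (a : α) : Quotient.mk s (g a) = Quotient.mk s (f a) :=
    Quotient.sound ⟨-1, by simp [σ, τ, hg a]⟩
  refine ⟨Quotient.mk s ⁻¹' A, fun a => ⟨hA (Quotient.mk s a), ?_⟩⟩
  rw [Set.mem_preimage, hgf]
  exact hA (Quotient.mk s a)

lemma Function.Involutive.two_mul_ncard_eq {α : Type*} [Finite α] {f : α → α} (hf : Involutive f)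
    {B : Set α} (hB : ∀ a, f a ∈ B ↔ a ∉ B) : 2 * B.ncard = Nat.card α := by
  have himage : f '' B = Bᶜ := by
    ext a
    rw [← hf a, hf.injective.mem_set_image, Set.mem_compl_iff, hf a, hB]
  have := Set.ncard_add_ncard_compl B
  rw [← himage, Set.ncard_image_of_injective B hf.injective] at this
  omega

namespace SimpleGraph

variable {V : Type*} {G : SimpleGraph V}

def IsProperEdgeColoring {α : Type*} (c : G.edgeSet → α) : Prop :=
  ∀ e f : G.edgeSet, e ≠ f → (∃ v, v ∈ e.1 ∧ v ∈ f.1) → c e ≠ c f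

section LocallyFinite

variable [G.LocallyFinite] {k : ℕ} {c : G.edgeSet → Fin k}

lemma IsProperEdgeColoring.existsUnique_adj (hG : G.IsRegularOfDegree k)
    (hc : G.IsProperEdgeColoring c) (v : V) (i : Fin k) :
    ∃! w, ∃ h : G.Adj v w, c ⟨s(v, w), h⟩ = i := by
  let F : G.neighborSet v → Fin k := fun w => c ⟨s(v, w), w.2⟩
  have hF : Injective F := by
    intro u w huw
    by_contra hne
    refine hc _ _ (fun h => hne ?_) ⟨v, Sym2.mem_mk_left _ _, Sym2.mem_mk_left _ _⟩ huw
    exact Subtype.ext (Sym2.congr_right.mp (congrArg Subtype.val h))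
  have hFbij : Bijective F := (Fintype.bijective_iff_injective_and_card F).mpr
    ⟨hF, by rw [card_neighborSet_eq_degree, hG v, Fintype.card_fin]⟩
  obtain ⟨w, hw⟩ := hFbij.2 i
  refine ⟨w, ⟨w.2, hw⟩, fun u ⟨hu, hcu⟩ => ?_⟩
  exact congrArg Subtype.val (@hF ⟨u, hu⟩ w (hcu.trans hw.symm))

lemma IsProperEdgeColoring.exists_involutive_adj (hG : G.IsRegularOfDegree k)
    (hc : G.IsProperEdgeColoring c) :
    ∃ f : Fin k → V → V, (∀ i, Involutive (f i)) ∧ (∀ i v, G.Adj v (f i v)) ∧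
      ∀ u v, G.Adj u v → ∃ i, v = f i u := by
  choose f hf huniq using fun i v => hc.existsUnique_adj hG v i
  refine ⟨f, fun i v => ?_, fun i v => (hf i v).1, fun u v h => ⟨_, huniq _ u v ⟨h, rfl⟩⟩⟩
  obtain ⟨h, hcol⟩ := hf i v
  exact (huniq i (f i v) v ⟨h.symm, (congrArg c (Subtype.ext Sym2.eq_swap)).trans hcol⟩).symm

end LocallyFinite

lemma Reachable.eq_or_adj_of_subsingleton_adj (huniq : ∀ ⦃v u w⦄, G.Adj v u → G.Adj v w → u = w)
    {v u : V} (h : G.Reachable v u) : u = v ∨ G.Adj v u := by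
  obtain ⟨p⟩ := h
  induction p with
  | nil => exact .inl rfl
  | cons hvx _ ih =>
    rcases ih with rfl | hxu
    · exact .inr hvx
    · exact .inl (huniq hxu hvx.symm)

lemma ConnectedComponent.ncard_supp_le_two_of_subsingleton_adj
    (huniq : ∀ ⦃v u w⦄, G.Adj v u → G.Adj v w → u = w) (c : G.ConnectedComponent) :
    c.supp.ncard ≤ 2 := by
  induction c using ConnectedComponent.ind with | _ v => ?_
  have hN : {w | G.Adj v w}.Subsingleton := fun u hu w hw => huniq hu hw
  have hsub : (G.connectedComponentMk v).supp ⊆ insert v {w | G.Adj v w} := fun u hu =>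
    ((ConnectedComponent.eq.mp hu).symm.eq_or_adj_of_subsingleton_adj huniq)
  calc (G.connectedComponentMk v).supp.ncard
      ≤ (insert v {w | G.Adj v w}).ncard := Set.ncard_le_ncard hsub (hN.finite.insert v)
    _ ≤ {w | G.Adj v w}.ncard + 1 := Set.ncard_insert_le _ _
    _ ≤ 2 := by have := (Set.ncard_le_one hN.finite).2 hN; omega

lemma smallComponents_two_of_subsingleton_adj {S : Set V}
    (huniq : ∀ v ∈ S, ∀ u ∈ S, ∀ w ∈ S, G.Adj v u → G.Adj v w → u = w) :
    SmallComponents G S 2 :=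
  ConnectedComponent.ncard_supp_le_two_of_subsingleton_adj fun v u w hu hw =>
    Subtype.ext (huniq v v.2 u u.2 w w.2 hu hw)

lemma isKBisection_two_of_alternating [Fintype V] {f : Fin 3 → V → V}
    (hf : Involutive (f 0)) (hadj : ∀ u v, G.Adj u v → ∃ i, v = f i u) {B : Set V}
    (hB : ∀ v, (f 0 v ∈ B ↔ v ∉ B) ∧ (f 1 v ∈ B ↔ v ∉ B)) : IsKBisection G 2 B := by
  have hsmall (S : Set V) (hS : ∀ v ∈ S, f 0 v ∉ S ∧ f 1 v ∉ S) : SmallComponents G S 2 := by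
    have hadj2 {v u : V} (hv : v ∈ S) (hu : u ∈ S) (h : G.Adj v u) : u = f 2 v := by
      obtain ⟨i, rfl⟩ := hadj v u h
      fin_cases i
      · exact absurd hu (hS v hv).1
      · exact absurd hu (hS v hv).2
      · rfl
    exact smallComponents_two_of_subsingleton_adj fun v hv u hu w hw hvu hvw =>
      (hadj2 hv hu hvu).trans (hadj2 hv hw hvw).symm
  refine ⟨?_, hsmall B fun v hv => ?_, hsmall Bᶜ fun v hv => ?_⟩
  · rw [hf.two_mul_ncard_eq (fun v => (hB v).1), Nat.card_eq_fintype_card]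
  · exact ⟨fun h => (hB v).1.1 h hv, fun h => (hB v).2.1 h hv⟩
  · exact ⟨not_not.2 ((hB v).1.2 hv), not_not.2 ((hB v).2.2 hv)⟩

end SimpleGraph

/-- Every 3-edge-colourable cubic graph admits a 2-bisection. -/
theorem stmt1 {V : Type*} [Fintype V] (G : SimpleGraph V) [DecidableRel G.Adj]
    (hcubic : G.IsRegularOfDegree 3)
    (hcol : ∃ c : G.edgeSet → Fin 3, ∀ e f : G.edgeSet, e ≠ f →
      (∃ v : V, v ∈ e.1 ∧ v ∈ f.1) → c e ≠ c f) :
    ∃ B : Set V, IsKBisection G 2 B := by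
  obtain ⟨c, hc⟩ := hcol
  obtain ⟨f, hinv, hadj, hcover⟩ := IsProperEdgeColoring.exists_involutive_adj hcubic hc
  obtain ⟨B, hB⟩ := exists_set_apply_mem_iff_notMem_of_involutive (hinv 0) (hinv 1)
    (fun v => (hadj 0 v).ne') (fun v => (hadj 1 v).ne')
  exact ⟨B, isKBisection_two_of_alternating (hinv 0) hcover hB⟩
end

section
/- For a permutation p of {0,...,n-1}, the cycle permutation graphs C(n,p) and C(n,p̄) are isomorphic, where p̄ is defined by p̄(i) = n − p(i) (mod n). -/
open SimpleGraph

/-- The cycle permutation graph `C(n,p)`: two disjoint `n`-cycles on `u_0,…,u_{n-1}`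
(the `Sum.inl` vertices) and `v_0,…,v_{n-1}` (the `Sum.inr` vertices), together with
the matching edges `v_i u_{p(i)}`. -/
def cyclePerm (n : ℕ) (p : Equiv.Perm (Fin n)) : SimpleGraph (Fin n ⊕ Fin n) :=
  SimpleGraph.fromRel (fun a b =>
    match a, b with
    | .inl i, .inl j => j.val = (i.val + 1) % n
    | .inr i, .inr j => j.val = (i.val + 1) % n
    | .inr i, .inl j => j = p i
    | _, _ => False)

/-! In `Fin n` arithmetic `p̄(i) = n - p(i) mod n` is `-p(i)`. Reflecting the `u`-cycle,
`u_i ↦ u_{-i}`, and fixing every `v_i` is an isomorphism `C(n,p) ≃ C(n,p̄)`: reflection maps a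
cycle onto itself, and it sends the matching edge `v_i u_{p(i)}` to `v_i u_{-p(i)}`. -/

theorem Fin.val_eq_add_one_mod_iff {n : ℕ} [NeZero n] (i j : Fin n) :
    j.val = (i.val + 1) % n ↔ j = i + 1 := by
  rw [Fin.ext_iff, Fin.val_add, Fin.val_one', Nat.add_mod_mod]

theorem neg_eq_neg_add_iff {G : Type*} [AddCommGroup G] (a b c : G) :
    -b = -a + c ↔ a = b + c := by
  grind

namespace cyclePerm

variable {n : ℕ} (p : Equiv.Perm (Fin n)) (i j : Fin n)

theorem adj_inl_inl [NeZero n] :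
    (cyclePerm n p).Adj (.inl i) (.inl j) ↔ i ≠ j ∧ (j = i + 1 ∨ i = j + 1) := by
  simp [cyclePerm, Fin.val_eq_add_one_mod_iff]

theorem adj_inr_inr [NeZero n] :
    (cyclePerm n p).Adj (.inr i) (.inr j) ↔ i ≠ j ∧ (j = i + 1 ∨ i = j + 1) := by
  simp [cyclePerm, Fin.val_eq_add_one_mod_iff]

theorem adj_inr_inl : (cyclePerm n p).Adj (.inr i) (.inl j) ↔ j = p i := by
  simp [cyclePerm]

theorem adj_inl_inr : (cyclePerm n p).Adj (.inl i) (.inr j) ↔ i = p j := by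
  simp [cyclePerm]

def isoTransNeg : cyclePerm n p ≃g cyclePerm n (p.trans (Equiv.neg (Fin n))) where
  toEquiv := Equiv.sumCongr (Equiv.neg (Fin n)) (Equiv.refl (Fin n))
  map_rel_iff' := by
    rintro (i | i) (j | j) <;> have := NeZero.of_pos i.pos <;>
      simp only [Equiv.sumCongr_apply, Sum.map_inl, Sum.map_inr, Equiv.neg_apply,
        Equiv.refl_apply, Equiv.trans_apply, adj_inl_inl, adj_inr_inr, adj_inl_inr, adj_inr_inl,
        ne_eq, neg_inj, neg_eq_neg_add_iff, or_comm]

end cyclePerm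

theorem stmt3_general (n : ℕ) (p : Equiv.Perm (Fin n)) :
    Nonempty (cyclePerm n p ≃g cyclePerm n (p.trans (Equiv.neg (Fin n)))) :=
  ⟨cyclePerm.isoTransNeg p⟩

/-- `C(n,p)` and `C(n,p̄)` are isomorphic, where `p̄(i) = n - p(i) (mod n) = -p(i)`. -/
theorem stmt3 (n : ℕ) (hn : 4 ≤ n) (p : Equiv.Perm (Fin n)) :
    Nonempty (cyclePerm n p ≃g cyclePerm n (p.trans (Equiv.neg (Fin n)))) :=
  stmt3_general n p
end

section
/- If n is even, then for every permutation p of {0,...,n-1} the cycle permutation graph C(n,p) admits a 2-bisection. -/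
/-!
Colour every vertex `u_i`, `v_i` by the parity of `i`. Since `n` is even, consecutive vertices on
either cycle get different colours, so the only monochromatic edges are matching edges and each
colour class induces a graph of maximum degree one, whose components have at most two vertices.
Shifting both cycles by one step swaps the two colour classes, so they have the same size.
-/

open SimpleGraph

namespace SimpleGraph

variable {W : Type*} {H : SimpleGraph W}

lemma Reachable.eq_or_adj_of_subsingleton_neighborSet
    (hH : ∀ v, (H.neighborSet v).Subsingleton) {v x : W} (hvx : H.Reachable v x) :
    x = v ∨ H.Adj v x := by
  obtain ⟨w⟩ := hvx
  induction w with
  | nil => exact .inl rfl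
  | cons hab _ ih =>
    rcases ih with rfl | hbc
    · exact .inr hab
    · exact .inl (hH _ hbc hab.symm)

lemma ConnectedComponent.ncard_supp_le_two_of_subsingleton_neighborSet
    (hH : ∀ v, (H.neighborSet v).Subsingleton) (c : H.ConnectedComponent) :
    c.supp.ncard ≤ 2 := by
  induction c using ConnectedComponent.ind with
  | _ v =>
  have hsupp : (H.connectedComponentMk v).supp ⊆ insert v (H.neighborSet v) := fun x hx =>
    (ConnectedComponent.exact hx).symm.eq_or_adj_of_subsingleton_neighborSet hH
  calc (H.connectedComponentMk v).supp.ncard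
      ≤ (insert v (H.neighborSet v)).ncard := Set.ncard_le_ncard hsupp ((hH v).finite.insert v)
    _ ≤ (H.neighborSet v).ncard + 1 := Set.ncard_insert_le _ _
    _ ≤ 1 + 1 := by grw [(Set.ncard_le_one (hH v).finite).mpr fun _ ha _ hb => hH v ha hb]

end SimpleGraph

lemma Set.two_mul_ncard_eq_of_swap_compl {α : Type*} [Finite α] {s : Set α} (e : α ≃ α)
    (he : ∀ x, e x ∈ s ↔ x ∉ s) : 2 * s.ncard = Nat.card α := by
  have himage : e '' s = sᶜ := Set.ext fun y => by
    obtain ⟨x, rfl⟩ := e.surjective y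
    rw [e.injective.mem_set_image, Set.mem_compl_iff, he, not_not]
  have hcompl : sᶜ.ncard = s.ncard := by rw [← himage, Set.ncard_image_of_injective _ e.injective]
  rw [← Set.ncard_add_ncard_compl s, hcompl, two_mul]

lemma Fin.val_finRotate {n : ℕ} (i : Fin n) : (finRotate n i : ℕ) = (i + 1) % n := by
  obtain ⟨m, rfl⟩ := Nat.exists_eq_succ_of_ne_zero i.pos.ne'
  rw [finRotate_apply, Fin.val_add, Fin.val_one', Nat.add_mod_mod]

lemma Nat.even_add_one_mod_iff {n i : ℕ} (hn : Even n) (hi : i < n) :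
    Even ((i + 1) % n) ↔ ¬ Even i := by
  rcases (Nat.succ_le_of_lt hi).lt_or_eq with h | h
  · rw [Nat.mod_eq_of_lt h, Nat.even_add_one]
  · subst h
    rw [Nat.mod_self]
    exact iff_of_true .zero (Nat.even_add_one.mp hn)

section CyclePerm

variable {n : ℕ}

def vertexIndex : Fin n ⊕ Fin n → ℕ := Sum.elim Fin.val Fin.val

def matchingPartner (p : Equiv.Perm (Fin n)) : Fin n ⊕ Fin n → Fin n ⊕ Fin n :=
  Sum.elim (fun j => .inr (p.symm j)) (fun i => .inl (p i))

lemma vertexIndex_lt (x : Fin n ⊕ Fin n) : vertexIndex x < n := by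
  cases x <;> exact Fin.isLt _

lemma not_even_iff_of_succ_mod (hn : Even n) {i j : Fin n}
    (h : (j : ℕ) = (i + 1) % n ∨ (i : ℕ) = (j + 1) % n) : ¬(Even (i : ℕ) ↔ Even (j : ℕ)) := by
  rcases h with h | h
  · rw [h, Nat.even_add_one_mod_iff hn i.isLt]; tauto
  · rw [h, Nat.even_add_one_mod_iff hn j.isLt]; tauto

lemma eq_matchingPartner_of_cyclePerm_adj (hn : Even n) {p : Equiv.Perm (Fin n)}
    {x y : Fin n ⊕ Fin n} (hxy : (cyclePerm n p).Adj x y)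
    (hpar : Even (vertexIndex x) ↔ Even (vertexIndex y)) : y = matchingPartner p x := by
  rcases x with i | i <;> rcases y with j | j <;>
    simp only [cyclePerm, fromRel_adj, vertexIndex, matchingPartner, Sum.elim_inl, Sum.elim_inr,
      Sum.inl.injEq, Sum.inr.injEq, reduceCtorEq, ne_eq, not_false_eq_true, true_and, false_or,
      or_false] at hxy hpar ⊢
  · exact (not_even_iff_of_succ_mod hn hxy.2 hpar).elim
  · rw [hxy, Equiv.symm_apply_apply]
  · exact hxy
  · exact (not_even_iff_of_succ_mod hn hxy.2 hpar).elim

def evenVertices (n : ℕ) : Set (Fin n ⊕ Fin n) := {x | Even (vertexIndex x)}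

lemma smallComponents_cyclePerm_of_same_parity (hn : Even n) (p : Equiv.Perm (Fin n))
    {s : Set (Fin n ⊕ Fin n)}
    (hs : ∀ x ∈ s, ∀ y ∈ s, Even (vertexIndex x) ↔ Even (vertexIndex y)) :
    SmallComponents (cyclePerm n p) s 2 := by
  intro c
  refine c.ncard_supp_le_two_of_subsingleton_neighborSet fun v a hva b hvb => Subtype.ext ?_
  have ha : a.1 = matchingPartner p v := eq_matchingPartner_of_cyclePerm_adj hn hva (hs _ v.2 _ a.2)
  have hb : b.1 = matchingPartner p v := eq_matchingPartner_of_cyclePerm_adj hn hvb (hs _ v.2 _ b.2)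
  rw [ha, hb]

lemma vertexIndex_sumCongr_finRotate (x : Fin n ⊕ Fin n) :
    vertexIndex (Equiv.sumCongr (finRotate n) (finRotate n) x) = (vertexIndex x + 1) % n := by
  cases x <;> exact Fin.val_finRotate _

lemma two_mul_ncard_evenVertices (hn : Even n) :
    2 * (evenVertices n).ncard = Fintype.card (Fin n ⊕ Fin n) := by
  rw [← Nat.card_eq_fintype_card]
  refine Set.two_mul_ncard_eq_of_swap_compl (Equiv.sumCongr (finRotate n) (finRotate n)) fun x => ?_
  simp only [evenVertices, Set.mem_ofPred_eq, vertexIndex_sumCongr_finRotate]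
  exact Nat.even_add_one_mod_iff hn (vertexIndex_lt x)

end CyclePerm

theorem stmt5_general (n : ℕ) (heven : Even n) (p : Equiv.Perm (Fin n)) :
    ∃ B : Set (Fin n ⊕ Fin n), IsKBisection (cyclePerm n p) 2 B :=
  ⟨evenVertices n, two_mul_ncard_evenVertices heven,
    smallComponents_cyclePerm_of_same_parity heven p fun _ hx _ hy => iff_of_true hx hy,
    smallComponents_cyclePerm_of_same_parity heven p fun _ hx _ hy => iff_of_false hx hy⟩

/-- If `n` is even, the cycle permutation graph `C(n,p)` admits a 2-bisection. -/
theorem stmt5 (n : ℕ) (hn : 4 ≤ n) (heven : Even n) (p : Equiv.Perm (Fin n)) :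
    ∃ B : Set (Fin n ⊕ Fin n), IsKBisection (cyclePerm n p) 2 B :=
  stmt5_general n heven p
end

section
/- The Petersen graph admits a 4-bisection such that the two induced monochromatic subgraphs are isomorphic linear forests. -/
open SimpleGraph

/-- The Petersen graph as the Kneser graph K(5,2): vertices are the 2-element subsets
of a 5-element set, adjacent iff disjoint. -/
def petersen : SimpleGraph {s : Finset (Fin 5) // s.card = 2} where
  Adj a b := Disjoint a.1 b.1
  symm := ⟨fun a b h => h.symm⟩
  loopless := ⟨fun a h => by
    have h2 := a.2
    have h3 : Disjoint a.1 a.1 := h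
    rw [disjoint_self] at h3
    simp [h3] at h2⟩

/-! Write `ij` for the vertex `{i, j}`. Take `B = {02, 14, 03, 12, 01}`: it induces the path
02 – 14 – 03 – 12 together with the isolated vertex 01, and its complement induces the path
23 – 04 – 13 – 24 together with the isolated vertex 34. Listing both sides in these orders
gives the same labelled graph on `Fin 5`, which is a subgraph of the path on `Fin 5`, hence a
linear forest; the isolated vertex leaves at most 4 vertices for every other component. -/

namespace SimpleGraph

variable {α V W : Type*}

/-- A vertex of maximal order on a cycle has two distinct smaller neighbours on it. -/
theorem isAcyclic_of_subsingleton_lowerNeighbors [LinearOrder V] {G : SimpleGraph V}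
    (h : ∀ v, {u | G.Adj v u ∧ u < v}.Subsingleton) : G.IsAcyclic := by
  intro v c hc
  set m := c.support.toFinset.max' ⟨v, by simp⟩
  have hm : m ∈ c.support := by simpa using c.support.toFinset.max'_mem ⟨v, by simp⟩
  let c' := c.rotate m hm
  have hc' : c'.IsCycle := hc.rotate hm
  have below {u} (hu : u ∈ c'.support) (hadj : G.Adj m u) : G.Adj m u ∧ u < m := by
    refine ⟨hadj, lt_of_le_of_ne ?_ hadj.ne'⟩
    exact c.support.toFinset.le_max' u (by simpa using (c.mem_support_rotate_iff m hm).mp hu)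
  exact hc'.snd_ne_penultimate <|
    h m (below (c'.getVert_mem_support 1) (c'.adj_snd hc'.not_nil))
      (below (c'.getVert_mem_support _) (c'.adj_penultimate hc'.not_nil).symm)

theorem isLinearForest_hasse [LinearOrder V] : IsLinearForest (hasse V) := by
  have lower (v : V) : {u | u ⋖ v}.Subsingleton := fun _ ha _ hb => ha.unique_left hb
  have upper (v : V) : {u | v ⋖ u}.Subsingleton := fun _ ha _ hb => ha.unique_right hb
  refine ⟨isAcyclic_of_subsingleton_lowerNeighbors fun v => ?_, fun v => ?_⟩
  · exact (lower v).anti fun u hu => hu.1.resolve_left fun hvu => hvu.lt.not_gt hu.2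
  · have : (hasse V).neighborSet v = {u | v ⋖ u} ∪ {u | u ⋖ v} := by ext; simp [hasse_adj]
    rw [this]
    calc _ ≤ {u | v ⋖ u}.ncard + {u | u ⋖ v}.ncard := Set.ncard_union_le _ _
      _ ≤ 1 + 1 := by
        gcongr
        · exact (Set.ncard_le_one (upper v).finite).2 (upper v)
        · exact (Set.ncard_le_one (lower v).finite).2 (lower v)

theorem IsLinearForest.comap [Finite W] {G : SimpleGraph V} {H : SimpleGraph W} (f : G →g H)
    (hf : Function.Injective f) (hH : IsLinearForest H) : IsLinearForest G := by
  refine ⟨hH.1.comap f hf, fun v => le_trans ?_ (hH.2 (f v))⟩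
  exact Set.ncard_le_ncard_of_injOn f (fun w hw => f.map_adj hw) hf.injOn (Set.toFinite _)

theorem ConnectedComponent.ncard_supp_le_of_isIsolated [Finite V] {G : SimpleGraph V} {v : V}
    (hv : G.IsIsolated v) (hV : 1 < Nat.card V) (c : G.ConnectedComponent) :
    c.supp.ncard ≤ Nat.card V - 1 := by
  by_cases hvc : v ∈ c.supp
  · have : c.supp ⊆ {v} := by
      intro w hw
      obtain ⟨p⟩ := ConnectedComponent.exact (hvc.trans hw.symm)
      cases p with
      | nil => rfl
      | cons hadj _ => exact absurd hadj (hv _)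
    calc c.supp.ncard ≤ ({v} : Set V).ncard := Set.ncard_le_ncard this
      _ ≤ Nat.card V - 1 := by rw [Set.ncard_singleton]; omega
  · calc c.supp.ncard ≤ ({v}ᶜ : Set V).ncard :=
          Set.ncard_le_ncard fun w hw hwv => hvc (hwv ▸ hw)
      _ = Nat.card V - 1 := by rw [Set.ncard_compl, Set.ncard_singleton]

noncomputable def comapIsoInduceRange (G : SimpleGraph V) (f : α ↪ V) :
    G.comap f ≃g G.induce (Set.range f) :=
  (Embedding.comap f G).isoInduceRange

theorem nonempty_iso_induce_range_of_comap_eq {G : SimpleGraph V} {H : SimpleGraph W}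
    {f : α ↪ V} {g : α ↪ W} (h : G.comap f = H.comap g) :
    Nonempty (G.induce (Set.range f) ≃g H.induce (Set.range g)) :=
  ⟨(comapIsoInduceRange H g).comp
    ((h ▸ Iso.refl : G.comap f ≃g H.comap g).comp (comapIsoInduceRange G f).symm)⟩

theorem isLinearForest_induce_range [Finite α] {G : SimpleGraph V} (f : α ↪ V)
    (h : IsLinearForest (G.comap f)) : IsLinearForest (G.induce (Set.range f)) :=
  h.comap (comapIsoInduceRange G f).symm.toHom (comapIsoInduceRange G f).symm.injective

theorem smallComponents_range_of_isIsolated [Finite α] (G : SimpleGraph V) (f : α ↪ V) {a : α}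
    (ha : (G.comap f).IsIsolated a) (hα : 1 < Nat.card α) :
    SmallComponents G (Set.range f) (Nat.card α - 1) := by
  have hcard : Nat.card (Set.range f) = Nat.card α := Nat.card_range_of_injective f.injective
  intro c
  rw [← hcard]
  have hisolated : (G.induce (Set.range f)).IsIsolated ⟨f a, a, rfl⟩ := by
    rintro ⟨_, b, rfl⟩
    exact ha b
  exact ConnectedComponent.ncard_supp_le_of_isIsolated hisolated (hcard ▸ hα) c

end SimpleGraph

namespace Petersen

theorem adj_iff {a b : {s : Finset (Fin 5) // s.card = 2}} :
    petersen.Adj a b ↔ Disjoint a.1 b.1 :=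
  Iff.rfl

def pair (i j : Fin 5) (h : i ≠ j := by decide) : {s : Finset (Fin 5) // s.card = 2} :=
  ⟨{i, j}, Finset.card_pair h⟩

def blue : Fin 5 ↪ {s : Finset (Fin 5) // s.card = 2} :=
  ⟨![pair 0 2, pair 1 4, pair 0 3, pair 1 2, pair 0 1], by decide⟩

def red : Fin 5 ↪ {s : Finset (Fin 5) // s.card = 2} :=
  ⟨![pair 2 3, pair 0 4, pair 1 3, pair 2 4, pair 3 4], by decide⟩

theorem compl_range_blue : (Set.range blue)ᶜ = Set.range red := by
  ext v
  simp only [Set.mem_compl_iff, Set.mem_range]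
  revert v
  decide

theorem comap_blue_eq_comap_red : petersen.comap blue = petersen.comap red := by
  ext i j
  simp only [comap_adj, adj_iff]
  revert i j
  decide

theorem comap_blue_le_pathGraph : petersen.comap blue ≤ pathGraph 5 := by
  intro i j
  simp only [comap_adj, adj_iff, pathGraph_adj]
  revert i j
  decide

theorem isIsolated_comap_blue : (petersen.comap blue).IsIsolated 4 := by
  intro j
  simp only [comap_adj, adj_iff]
  revert j
  decide

theorem isIsolated_comap_red : (petersen.comap red).IsIsolated 4 :=
  comap_blue_eq_comap_red ▸ isIsolated_comap_blue

end Petersen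

open Petersen

/-- The Petersen graph admits a 4-bisection such that the two induced monochromatic
subgraphs are isomorphic linear forests. -/
theorem stmt8 : ∃ B : Set {s : Finset (Fin 5) // s.card = 2},
    IsKBisection petersen 4 B ∧
    Nonempty (petersen.induce B ≃g petersen.induce Bᶜ) ∧
    IsLinearForest (petersen.induce B) ∧ IsLinearForest (petersen.induce Bᶜ) := by
  have hforest : IsLinearForest (petersen.induce (Set.range blue)) :=
    isLinearForest_induce_range blue <|
      isLinearForest_hasse.comap (Hom.ofLE comap_blue_le_pathGraph) Function.injective_id
  obtain ⟨e⟩ := nonempty_iso_induce_range_of_comap_eq comap_blue_eq_comap_red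
  refine ⟨Set.range blue, ⟨?_, ?_, ?_⟩, ?_, hforest, ?_⟩
  · rw [Set.ncard_range_of_injective blue.injective, Nat.card_fin, Fintype.card_finset_len]
    rfl
  · simpa using smallComponents_range_of_isIsolated petersen blue isIsolated_comap_blue (by simp)
  all_goals rw [compl_range_blue]
  · simpa using smallComponents_range_of_isIsolated petersen red isIsolated_comap_red (by simp)
  · exact ⟨e⟩
  · exact hforest.comap e.symm.toHom e.symm.injective
end

section
/- If a cubic graph G admits a bisection whose two induced monochromatic subgraphs are isomorphic, then G admits a bisection whose two induced monochromatic subgraphs are isomorphic and each has maximum degree at most 2. -/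
/-!
Extend an isomorphism `G[B] ≃g G[Bᶜ]` to the involution `σ` of `V` that is the isomorphism on `B`
and its inverse on `Bᶜ`. In a cubic graph, if `v ∈ B` has all three neighbours in `B`, then `σ v`
has all three in `Bᶜ`. Exchanging `v` and `σ v` between the classes leaves `σ v` isolated in the
new `B` and `v` isolated in the new `Bᶜ`, so the same `σ` still exchanges the two classes
isomorphically, while the number of edges inside `B` drops. A bisection minimising that number
therefore has no vertex of monochromatic degree 3.
-/

open SimpleGraph

namespace SimpleGraph

variable {V : Type*} (G : SimpleGraph V)

structure IsColorSwap (B : Set V) (σ : V → V) : Prop where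
  involutive : Function.Involutive σ
  mem_iff : ∀ x, σ x ∈ B ↔ x ∉ B
  adj_iff : ∀ ⦃x y⦄, x ∈ B → y ∈ B → (G.Adj (σ x) (σ y) ↔ G.Adj x y)

variable {G}

theorem Iso.exists_isColorSwap {B : Set V} (φ : G.induce B ≃g G.induce Bᶜ) :
    ∃ σ, G.IsColorSwap B σ := by
  classical
  let σ : V → V := fun x => if hx : x ∈ B then φ ⟨x, hx⟩ else φ.symm ⟨x, hx⟩
  have hσB : ∀ x (hx : x ∈ B), σ x = φ ⟨x, hx⟩ := fun x hx => dif_pos hx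
  have hσC : ∀ x (hx : x ∉ B), σ x = φ.symm ⟨x, hx⟩ := fun x hx => dif_neg hx
  refine ⟨σ, ⟨fun x => ?_, fun x => ?_, fun x y hx hy => ?_⟩⟩
  · by_cases hx : x ∈ B
    · simp [hσB x hx, hσC _ (φ ⟨x, hx⟩).2]
    · simp [hσC x hx, hσB _ (φ.symm ⟨x, hx⟩).2]
  · by_cases hx : x ∈ B
    · simp only [hσB x hx, hx, not_true_eq_false, iff_false]
      exact (φ ⟨x, hx⟩).2
    · simp only [hσC x hx, hx, not_false_eq_true, iff_true]
      exact (φ.symm ⟨x, hx⟩).2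
  · rw [hσB x hx, hσB y hy]
    exact φ.map_adj_iff

namespace IsColorSwap

variable {B : Set V} {σ : V → V} (hσ : G.IsColorSwap B σ)
include hσ

theorem apply_notMem {x : V} (hx : x ∈ B) : σ x ∉ B := fun h => (hσ.mem_iff x).1 h hx

theorem nonempty_iso : Nonempty (G.induce B ≃g G.induce Bᶜ) :=
  ⟨⟨(hσ.involutive.toPerm σ).subtypeEquiv fun x => by simp [hσ.mem_iff],
    fun {x y} => hσ.adj_iff x.2 y.2⟩⟩

theorem image_neighborSet_inter {x : V} (hx : x ∈ B) :
    σ '' (G.neighborSet x ∩ B) = G.neighborSet (σ x) ∩ Bᶜ := by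
  ext z
  constructor
  · rintro ⟨y, ⟨hxy, hy⟩, rfl⟩
    exact ⟨(hσ.adj_iff hx hy).2 hxy, hσ.apply_notMem hy⟩
  · rintro ⟨hxz, hz⟩
    have hσz : σ z ∈ B := (hσ.mem_iff z).2 hz
    refine ⟨σ z, ⟨?_, hσz⟩, hσ.involutive z⟩
    show G.Adj x (σ z)
    rwa [← hσ.adj_iff hx hσz, hσ.involutive z]

theorem ncard_neighborSet_inter_compl {x : V} (hx : x ∈ B) :
    (G.neighborSet (σ x) ∩ Bᶜ).ncard = (G.neighborSet x ∩ B).ncard := by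
  rw [← hσ.image_neighborSet_inter hx, Set.ncard_image_of_injective _ hσ.involutive.injective]

theorem exchange {v : V} (hv : v ∈ B) (hNv : G.neighborSet v ⊆ B)
    (hNw : G.neighborSet (σ v) ⊆ Bᶜ) : G.IsColorSwap (insert (σ v) (B \ {v})) σ where
  involutive := hσ.involutive
  mem_iff x := by
    have hw := hσ.apply_notMem hv
    have hσv : σ x = σ v ↔ x = v := hσ.involutive.injective.eq_iff
    have hσw : σ x = v ↔ x = σ v := hσ.involutive.eq_iff
    simp only [Set.mem_insert_iff, Set.mem_sdiff, Set.mem_singleton_iff, hσv, hσw, hσ.mem_iff x]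
    grind
  adj_iff x y hx hy := by
    have hnotAdj : ∀ y ∈ B \ {v}, ¬ G.Adj v (σ y) ∧ ¬ G.Adj (σ v) y := fun y hy =>
      ⟨fun h => hσ.apply_notMem hy.1 (hNv h), fun h => hNw h hy.1⟩
    rcases hx with rfl | hx <;> rcases hy with rfl | hy
    · simp
    · rw [hσ.involutive v]
      exact iff_of_false (hnotAdj y hy).1 (hnotAdj y hy).2
    · rw [hσ.involutive v]
      exact iff_of_false (fun h => (hnotAdj x hx).1 h.symm) (fun h => (hnotAdj x hx).2 h.symm)
    · exact hσ.adj_iff hx.1 hy.1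

end IsColorSwap

def adjPairsWithin (B : Set V) : Set (V × V) := {p | p.1 ∈ B ∧ p.2 ∈ B ∧ G.Adj p.1 p.2}

theorem adjPairsWithin_exchange_ssubset {B : Set V} {u v w : V} (hv : v ∈ B) (hu : u ∈ B)
    (hvu : G.Adj v u) (hvw : v ≠ w) (hNw : G.neighborSet w ⊆ Bᶜ) :
    G.adjPairsWithin (insert w (B \ {v})) ⊂ G.adjPairsWithin B := by
  have hB : ∀ a b, a ∈ insert w (B \ {v}) → b ∈ insert w (B \ {v}) → G.Adj a b → a ∈ B \ {v} := by
    rintro a b (rfl | ha) (rfl | hb) hab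
    · exact absurd hab (G.loopless.irrefl _)
    · exact absurd hb.1 (hNw hab)
    all_goals exact ha
  refine (Set.ssubset_iff_of_subset ?_).2 ⟨(v, u), ⟨hv, hu, hvu⟩, ?_⟩
  · rintro ⟨a, b⟩ ⟨ha, hb, hab⟩
    exact ⟨(hB a b ha hb hab).1, (hB b a hb ha hab.symm).1, hab⟩
  · rintro ⟨(h | h), -, -⟩
    exacts [hvw h, h.2 rfl]

theorem IsRegularOfDegree.ncard_neighborSet [G.LocallyFinite] {d : ℕ} (hG : G.IsRegularOfDegree d)
    (v : V) : (G.neighborSet v).ncard = d := by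
  rw [← Nat.card_coe_set_eq, Nat.card_eq_fintype_card, card_neighborSet_eq_degree, hG v]

theorem IsRegularOfDegree.neighborSet_subset_iff [G.LocallyFinite] {d : ℕ}
    (hG : G.IsRegularOfDegree d) {s : Set V} {v : V} :
    G.neighborSet v ⊆ s ↔ d ≤ (G.neighborSet v ∩ s).ncard := by
  rw [← hG.ncard_neighborSet v]
  refine ⟨fun h => by rw [Set.inter_eq_left.2 h], fun h => Set.inter_eq_left.1 ?_⟩
  exact Set.eq_of_subset_of_ncard_le Set.inter_subset_left h (Set.toFinite _)

theorem IsColorSwap.exists_forall_not_neighborSet_subset [Finite V] [G.LocallyFinite] {d : ℕ}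
    (hG : G.IsRegularOfDegree d) (hd : 0 < d) {B₀ : Set V} {σ : V → V}
    (h₀ : G.IsColorSwap B₀ σ) :
    ∃ B : Set V, B.ncard = B₀.ncard ∧ G.IsColorSwap B σ ∧ ∀ v ∈ B, ¬ G.neighborSet v ⊆ B := by
  obtain ⟨B, ⟨hcard, hσ⟩, hmin⟩ := Set.exists_min_image
    {B : Set V | B.ncard = B₀.ncard ∧ G.IsColorSwap B σ} (fun B => (G.adjPairsWithin B).ncard)
    (Set.toFinite _) ⟨B₀, rfl, h₀⟩
  refine ⟨B, hcard, hσ, fun v hv hNv => ?_⟩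
  have hw : σ v ∉ B := hσ.apply_notMem hv
  have hNw : G.neighborSet (σ v) ⊆ Bᶜ := by
    rwa [hG.neighborSet_subset_iff, hσ.ncard_neighborSet_inter_compl hv,
      ← hG.neighborSet_subset_iff]
  obtain ⟨u, hvu⟩ : (G.neighborSet v).Nonempty :=
    Set.nonempty_of_ncard_ne_zero (hG.ncard_neighborSet v ▸ hd.ne')
  have hlt := Set.ncard_lt_ncard (G.adjPairsWithin_exchange_ssubset hv (hNv hvu) hvu
    (ne_of_mem_of_not_mem hv hw) hNw) (Set.toFinite _)
  exact (hmin _ ⟨(Set.ncard_exchange hw hv).trans hcard, hσ.exchange hv hNv hNw⟩).not_gt hlt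

end SimpleGraph

/-- If a cubic graph admits a bisection with isomorphic parts, then it admits a bisection
with isomorphic parts both of maximum degree at most 2. -/
theorem stmt9 {V : Type*} [Fintype V] (G : SimpleGraph V) [DecidableRel G.Adj]
    (hcubic : G.IsRegularOfDegree 3)
    (h : ∃ B : Set V, 2 * B.ncard = Fintype.card V ∧
      Nonempty (G.induce B ≃g G.induce Bᶜ)) :
    ∃ B : Set V, 2 * B.ncard = Fintype.card V ∧
      Nonempty (G.induce B ≃g G.induce Bᶜ) ∧
      (∀ v ∈ B, (G.neighborSet v ∩ B).ncard ≤ 2) ∧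
      (∀ v ∈ Bᶜ, (G.neighborSet v ∩ Bᶜ).ncard ≤ 2) := by
  obtain ⟨B₀, hB₀, ⟨φ⟩⟩ := h
  obtain ⟨σ, hσ₀⟩ := φ.exists_isColorSwap
  obtain ⟨B, hcard, hσ, hB⟩ := hσ₀.exists_forall_not_neighborSet_subset hcubic three_pos
  have hle : ∀ v ∈ B, (G.neighborSet v ∩ B).ncard ≤ 2 := fun v hv => by
    have := mt hcubic.neighborSet_subset_iff.2 (hB v hv)
    omega
  refine ⟨B, hcard ▸ hB₀, hσ.nonempty_iso, hle, fun v hv => ?_⟩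
  have hσv : σ v ∈ B := (hσ.mem_iff v).2 hv
  rw [← hσ.involutive v, hσ.ncard_neighborSet_inter_compl hσv]
  exact hle _ hσv
end

section
/- Let G be a cubic graph with |V(G)| ≡ 0 (mod 4) admitting a Strong Wormald Colouring, let c_V be the induced vertex colouring (each vertex receives the colour of the two like-coloured edges at it), and let G' be the spanning subgraph of G consisting of the edges whose endpoints receive different colours in c_V. Then every connected component of G' is bipartite and contains exactly one cycle (i.e., is a tree plus an edge). -/
/-!
Every vertex `v` has degree `2` in one colour and degree `1` in the other, so it has a unique
*minority edge* `v f(v)`, of the colour in which `v` has degree `1`. Since no monochromatic path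
has length `1`, `f(v)` has degree `2` in that colour, so the minority edge is bichromatic;
conversely every bichromatic edge is the minority edge of exactly one of its endpoints. Hence
`v ↦ v f(v)` is a bijection from the vertices onto the edges of `G'`, and it restricts to each
component, which therefore has as many edges as vertices. Colouring by `c_V` shows `G'` is bipartite.
-/

open SimpleGraph

/-- The spanning subgraph of `G` consisting of the edges whose endpoints lie in different
classes of the bipartition `(B, Bᶜ)`. -/
def diffColourSubgraph {V : Type*} (G : SimpleGraph V) (B : Set V) : SimpleGraph V :=
  SimpleGraph.fromRel (fun u v => G.Adj u v ∧ ((u ∈ B) ↔ v ∉ B))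

namespace SimpleGraph

variable {V : Type*}

lemma IsRegularOfDegree.ncard_neighborSet_s11 [Fintype V] {G : SimpleGraph V} [DecidableRel G.Adj]
    {d : ℕ} (h : G.IsRegularOfDegree d) (v : V) : (G.neighborSet v).ncard = d := by
  rw [Set.ncard_eq_toFinset_card', ← h v]
  rfl

lemma fromEdgeSet_adj_of_subset {G : SimpleGraph V} {S : Set (Sym2 V)} (hS : S ⊆ G.edgeSet)
    {v w : V} : (fromEdgeSet S).Adj v w ↔ G.Adj v w ∧ s(v, w) ∈ S :=
  ⟨fun h => ⟨hS h.1, h.1⟩, fun h => ⟨h.2, h.1.ne⟩⟩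

lemma fromEdgeSet_edgeSet_diff_adj {G : SimpleGraph V} {S : Set (Sym2 V)} {v w : V} :
    (fromEdgeSet (G.edgeSet \ S)).Adj v w ↔ G.Adj v w ∧ s(v, w) ∉ S :=
  ⟨fun h => ⟨h.1.1, h.1.2⟩, fun h => ⟨⟨h.1, h.2⟩, h.1.ne⟩⟩

lemma ncard_neighborSet_fromEdgeSet_add_diff [Finite V] {G : SimpleGraph V} {S : Set (Sym2 V)}
    (hS : S ⊆ G.edgeSet) (v : V) :
    ((fromEdgeSet S).neighborSet v).ncard + ((fromEdgeSet (G.edgeSet \ S)).neighborSet v).ncard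
      = (G.neighborSet v).ncard := by
  rw [← Set.ncard_union_eq]
  · congr 1
    ext w
    simp only [Set.mem_union, mem_neighborSet, fromEdgeSet_adj_of_subset hS,
      fromEdgeSet_edgeSet_diff_adj]
    tauto
  · exact Set.disjoint_left.mpr fun w hB hW => hW.1.2 hB.1

lemma existsUnique_adj_of_ncard_neighborSet_eq_one {H : SimpleGraph V} {v : V}
    (h : (H.neighborSet v).ncard = 1) : ∃! w, H.Adj v w := by
  obtain ⟨w, hw⟩ := Set.ncard_eq_one.mp h
  exact ⟨w, show w ∈ H.neighborSet v by simp [hw], fun u hu => by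
    simpa [hw] using show u ∈ H.neighborSet v from hu⟩

lemma ncard_edgeSet_eq_of_xor [Finite V] {H : SimpleGraph V} (f : V → V)
    (hadj : ∀ v, H.Adj v (f v)) (hxor : ∀ u v, H.Adj u v → Xor (f u = v) (f v = u)) :
    H.edgeSet.ncard = Nat.card V := by
  have hrange : Set.range (fun v => s(v, f v)) = H.edgeSet := by
    ext e
    induction e with
    | _ u v =>
    refine ⟨?_, fun huv => ?_⟩
    · rintro ⟨w, hw⟩
      exact hw ▸ hadj w
    · rcases hxor u v huv with ⟨rfl, -⟩ | ⟨rfl, -⟩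
      · exact ⟨u, rfl⟩
      · exact ⟨v, Sym2.eq_swap⟩
  have hinj : Function.Injective (fun v => s(v, f v)) := by
    intro u v huv
    rcases Sym2.eq_iff.mp huv with ⟨h, -⟩ | ⟨hu, hv⟩
    · exact h
    · rcases hxor u v (hv ▸ hadj u) with ⟨-, h⟩ | ⟨-, h⟩
      · exact absurd hu.symm h
      · exact absurd hv h
  rw [← hrange, Set.ncard_range_of_injective hinj]

lemma ConnectedComponent.ncard_edgeSet_induce_supp_of_xor [Finite V] {H : SimpleGraph V}
    (f : V → V) (hadj : ∀ v, H.Adj v (f v))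
    (hxor : ∀ u v, H.Adj u v → Xor (f u = v) (f v = u)) (c : H.ConnectedComponent) :
    (H.induce c.supp).edgeSet.ncard = c.supp.ncard := by
  have hmaps (v : c.supp) : f v ∈ c.supp :=
    (ConnectedComponent.sound (hadj v).symm.reachable).trans v.2
  rw [← Nat.card_coe_set_eq]
  refine ncard_edgeSet_eq_of_xor (fun v => ⟨f v, hmaps v⟩) (fun v => hadj v) fun u v huv => ?_
  simpa only [Subtype.ext_iff] using hxor u v huv

lemma colorable_induce_diffColourSubgraph (G : SimpleGraph V) (B s : Set V) :
    ((diffColourSubgraph G B).induce s).Colorable 2 := by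
  classical
  refine Colorable.of_hom (Embedding.induce s).toHom
    ⟨Coloring.mk (fun v => if v ∈ B then 0 else 1) fun {u v} huv => ?_⟩
  obtain ⟨-, ⟨-, h⟩ | ⟨-, h⟩⟩ := huv
  all_goals by_cases hu : u ∈ B <;> by_cases hv : v ∈ B <;> simp_all

lemma diffColourSubgraph_adj {G : SimpleGraph V} {B : Set V} {u v : V} :
    (diffColourSubgraph G B).Adj u v ↔ G.Adj u v ∧ (u ∈ B ↔ v ∉ B) := by
  simp only [diffColourSubgraph, fromRel_adj]
  constructor
  · rintro ⟨-, h | h⟩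
    · exact h
    · exact ⟨h.1.symm, by tauto⟩
  · exact fun h => ⟨h.1.ne, Or.inl h⟩

section MonochromaticPaths

variable {G : SimpleGraph V} {S : Set (Sym2 V)}

-- `w` is the neighbour of `v` along the edge of the colour in which `v` has degree `1`.
lemma existsUnique_adj_mem_iff_ncard_ne_two (hS : S ⊆ G.edgeSet) {v : V}
    (hdeg : ((fromEdgeSet S).neighborSet v).ncard
      + ((fromEdgeSet (G.edgeSet \ S)).neighborSet v).ncard = 3)
    (hB : ((fromEdgeSet S).neighborSet v).ncard ≤ 2)
    (hW : ((fromEdgeSet (G.edgeSet \ S)).neighborSet v).ncard ≤ 2) :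
    ∃! w, G.Adj v w ∧ (s(v, w) ∈ S ↔ ((fromEdgeSet S).neighborSet v).ncard ≠ 2) := by
  by_cases h : ((fromEdgeSet S).neighborSet v).ncard = 2
  · have hW1 := existsUnique_adj_of_ncard_neighborSet_eq_one (v := v) (by omega :
      ((fromEdgeSet (G.edgeSet \ S)).neighborSet v).ncard = 1)
    simp only [fromEdgeSet_edgeSet_diff_adj] at hW1
    simpa [h] using hW1
  · have hB1 := existsUnique_adj_of_ncard_neighborSet_eq_one (v := v) (by omega :
      ((fromEdgeSet S).neighborSet v).ncard = 1)
    simp only [fromEdgeSet_adj_of_subset hS] at hB1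
    simpa [h] using hB1

lemma ncard_eq_two_iff_of_adj_mem_iff_ne_two (hS : S ⊆ G.edgeSet)
    (hdeg : ∀ v, ((fromEdgeSet S).neighborSet v).ncard
      + ((fromEdgeSet (G.edgeSet \ S)).neighborSet v).ncard = 3)
    (hlenB : ∀ u v : V, (fromEdgeSet S).Adj u v →
      ((fromEdgeSet S).neighborSet u).ncard = 2 ∨ ((fromEdgeSet S).neighborSet v).ncard = 2)
    (hlenW : ∀ u v : V, (fromEdgeSet (G.edgeSet \ S)).Adj u v →
      ((fromEdgeSet (G.edgeSet \ S)).neighborSet u).ncard = 2 ∨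
      ((fromEdgeSet (G.edgeSet \ S)).neighborSet v).ncard = 2)
    {v w : V} (hvw : G.Adj v w ∧ (s(v, w) ∈ S ↔ ((fromEdgeSet S).neighborSet v).ncard ≠ 2)) :
    ((fromEdgeSet S).neighborSet w).ncard = 2 ↔ ((fromEdgeSet S).neighborSet v).ncard ≠ 2 := by
  have := hdeg v
  have := hdeg w
  by_cases h : ((fromEdgeSet S).neighborSet v).ncard = 2
  · have hW := hlenW v w (fromEdgeSet_edgeSet_diff_adj.mpr ⟨hvw.1, by tauto⟩)
    omega
  · have hB := hlenB v w ((fromEdgeSet_adj_of_subset hS).mpr ⟨hvw.1, by tauto⟩)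
    omega

lemma exists_xor_orientation_diffColourSubgraph (hS : S ⊆ G.edgeSet)
    (hdeg : ∀ v, ((fromEdgeSet S).neighborSet v).ncard
      + ((fromEdgeSet (G.edgeSet \ S)).neighborSet v).ncard = 3)
    (hB : ∀ v, ((fromEdgeSet S).neighborSet v).ncard ≤ 2)
    (hW : ∀ v, ((fromEdgeSet (G.edgeSet \ S)).neighborSet v).ncard ≤ 2)
    (hlenB : ∀ u v : V, (fromEdgeSet S).Adj u v →
      ((fromEdgeSet S).neighborSet u).ncard = 2 ∨ ((fromEdgeSet S).neighborSet v).ncard = 2)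
    (hlenW : ∀ u v : V, (fromEdgeSet (G.edgeSet \ S)).Adj u v →
      ((fromEdgeSet (G.edgeSet \ S)).neighborSet u).ncard = 2 ∨
      ((fromEdgeSet (G.edgeSet \ S)).neighborSet v).ncard = 2) :
    ∃ f : V → V,
      (∀ v, (diffColourSubgraph G {v | ((fromEdgeSet S).neighborSet v).ncard = 2}).Adj v (f v)) ∧
      ∀ u v, (diffColourSubgraph G {v | ((fromEdgeSet S).neighborSet v).ncard = 2}).Adj u v →
        Xor (f u = v) (f v = u) := by
  choose f hf huniq using
    fun v => existsUnique_adj_mem_iff_ncard_ne_two hS (hdeg v) (hB v) (hW v)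
  have hpartner v := ncard_eq_two_iff_of_adj_mem_iff_ne_two hS hdeg hlenB hlenW (hf v)
  refine ⟨f, fun v => diffColourSubgraph_adj.mpr ⟨(hf v).1, by
    simp only [Set.mem_ofPred_eq, hpartner v, ne_eq, not_not]⟩,
    fun u v huv => ?_⟩
  obtain ⟨hGuv, hcross⟩ := diffColourSubgraph_adj.mp huv
  have hfu : f u = v ↔ (s(u, v) ∈ S ↔ ((fromEdgeSet S).neighborSet u).ncard ≠ 2) :=
    ⟨fun h => h ▸ (hf u).2, fun h => (huniq u v ⟨hGuv, h⟩).symm⟩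
  have hfv : f v = u ↔ (s(u, v) ∈ S ↔ ((fromEdgeSet S).neighborSet v).ncard ≠ 2) := by
    rw [Sym2.eq_swap]
    exact ⟨fun h => h ▸ (hf v).2, fun h => (huniq v u ⟨hGuv.symm, h⟩).symm⟩
  simp only [Set.mem_ofPred_eq] at hcross
  rw [xor_iff_not_iff, hfu, hfv]
  tauto

end MonochromaticPaths

end SimpleGraph

theorem stmt11_general {V : Type*} [Fintype V] (G : SimpleGraph V) [DecidableRel G.Adj]
    (hcubic : G.IsRegularOfDegree 3)
    (S : Set (Sym2 V)) (hS : S ⊆ G.edgeSet)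
    (hlfB : IsLinearForest (SimpleGraph.fromEdgeSet S))
    (hlfW : IsLinearForest (SimpleGraph.fromEdgeSet (G.edgeSet \ S)))
    (hlenB : ∀ u v : V, (SimpleGraph.fromEdgeSet S).Adj u v →
      ((SimpleGraph.fromEdgeSet S).neighborSet u).ncard = 2 ∨
      ((SimpleGraph.fromEdgeSet S).neighborSet v).ncard = 2)
    (hlenW : ∀ u v : V, (SimpleGraph.fromEdgeSet (G.edgeSet \ S)).Adj u v →
      ((SimpleGraph.fromEdgeSet (G.edgeSet \ S)).neighborSet u).ncard = 2 ∨
      ((SimpleGraph.fromEdgeSet (G.edgeSet \ S)).neighborSet v).ncard = 2) :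
    ∀ c : (diffColourSubgraph G
        {v : V | ((SimpleGraph.fromEdgeSet S).neighborSet v).ncard = 2}).ConnectedComponent,
      ((diffColourSubgraph G
          {v : V | ((SimpleGraph.fromEdgeSet S).neighborSet v).ncard = 2}).induce
          c.supp).Connected ∧
      ((diffColourSubgraph G
          {v : V | ((SimpleGraph.fromEdgeSet S).neighborSet v).ncard = 2}).induce
          c.supp).Colorable 2 ∧
      ((diffColourSubgraph G
          {v : V | ((SimpleGraph.fromEdgeSet S).neighborSet v).ncard = 2}).induce
          c.supp).edgeSet.ncard = c.supp.ncard := by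
  have hdeg v := (ncard_neighborSet_fromEdgeSet_add_diff hS v).trans (hcubic.ncard_neighborSet_s11 v)
  obtain ⟨f, hadj, hxor⟩ :=
    exists_xor_orientation_diffColourSubgraph hS hdeg hlfB.2 hlfW.2 hlenB hlenW
  intro c
  exact ⟨c.connected_toSimpleGraph, colorable_induce_diffColourSubgraph G _ c.supp,
    c.ncard_edgeSet_induce_supp_of_xor f hadj hxor⟩

/-- Given a Strong Wormald Colouring of a cubic graph of order `0 (mod 4)` with induced
vertex colouring `B` = vertices incident with two black edges, every connected component of
the subgraph `G'` of bichromatic edges is bipartite and is a tree plus an edge (connected,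
with as many edges as vertices). -/
theorem stmt11 {V : Type*} [Fintype V] (G : SimpleGraph V) [DecidableRel G.Adj]
    (hcubic : G.IsRegularOfDegree 3) (hmod : Fintype.card V % 4 = 0)
    (S : Set (Sym2 V)) (hS : S ⊆ G.edgeSet)
    (hlfB : IsLinearForest (SimpleGraph.fromEdgeSet S))
    (hlfW : IsLinearForest (SimpleGraph.fromEdgeSet (G.edgeSet \ S)))
    (hiso : Nonempty ((SimpleGraph.fromEdgeSet S) ≃g
      (SimpleGraph.fromEdgeSet (G.edgeSet \ S))))
    (hlenB : ∀ u v : V, (SimpleGraph.fromEdgeSet S).Adj u v →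
      ((SimpleGraph.fromEdgeSet S).neighborSet u).ncard = 2 ∨
      ((SimpleGraph.fromEdgeSet S).neighborSet v).ncard = 2)
    (hlenW : ∀ u v : V, (SimpleGraph.fromEdgeSet (G.edgeSet \ S)).Adj u v →
      ((SimpleGraph.fromEdgeSet (G.edgeSet \ S)).neighborSet u).ncard = 2 ∨
      ((SimpleGraph.fromEdgeSet (G.edgeSet \ S)).neighborSet v).ncard = 2) :
    ∀ c : (diffColourSubgraph G
        {v : V | ((SimpleGraph.fromEdgeSet S).neighborSet v).ncard = 2}).ConnectedComponent,
      ((diffColourSubgraph G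
          {v : V | ((SimpleGraph.fromEdgeSet S).neighborSet v).ncard = 2}).induce
          c.supp).Connected ∧
      ((diffColourSubgraph G
          {v : V | ((SimpleGraph.fromEdgeSet S).neighborSet v).ncard = 2}).induce
          c.supp).Colorable 2 ∧
      ((diffColourSubgraph G
          {v : V | ((SimpleGraph.fromEdgeSet S).neighborSet v).ncard = 2}).induce
          c.supp).edgeSet.ncard = c.supp.ncard :=
  stmt11_general G hcubic S hS hlfB hlfW hlenB hlenW
end

section
/- The Heawood graph has no decomposition of its edge set into two linear forests in which every path component has length at most 3. -/
/-!
A forest on `n` vertices with `c` components has `n - c` edges. If every component has at most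
`k` vertices then `c ≥ n / k`, so the forest has at most `(k - 1) n / k` edges. For the Heawood
graph (`n = 14`, `k = 4`) each of the two forests has at most `10` edges, which leaves one of
its `21` edges uncovered.
-/

open SimpleGraph

/-- The Heawood graph (LCF notation `[5,-5]^7`): the 14-cycle `0,1,…,13` together with the
chords `{i, i+5}` for `i` even. It is the incidence graph of the Fano plane. -/
def heawood : SimpleGraph (Fin 14) :=
  SimpleGraph.fromRel (fun i j => j = i + 1 ∨ (i.val % 2 = 0 ∧ j = i + 5))

namespace SimpleGraph

variable {V : Type*} {G : SimpleGraph V}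

lemma card_connectedComponent_lt_card_deleteEdges [Finite V] {u v : V} (huv : G.Adj u v)
    (hbr : G.IsBridge s(u, v)) :
    Nat.card G.ConnectedComponent < Nat.card (G.deleteEdges {s(u, v)}).ConnectedComponent := by
  have := Fintype.ofFinite G.ConnectedComponent
  have := Fintype.ofFinite (G.deleteEdges {s(u, v)}).ConnectedComponent
  simp only [Nat.card_eq_fintype_card]
  refine Fintype.card_lt_of_surjective_not_injective _
    (ConnectedComponent.surjective_map_ofLE (deleteEdges_le _)) fun hinj ↦ hbr ?_
  exact ConnectedComponent.exact <| hinj <| ConnectedComponent.connectedComponentMk_eq_of_adj huv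

lemma IsAcyclic.ncard_edgeSet_add_card_connectedComponent_le [Finite V] (hG : G.IsAcyclic) :
    G.edgeSet.ncard + Nat.card G.ConnectedComponent ≤ Nat.card V := by
  induction hn : G.edgeSet.ncard generalizing G with
  | zero =>
    simpa using Nat.card_le_card_of_surjective _ fun c : G.ConnectedComponent ↦ c.exists_rep
  | succ n ih =>
    obtain ⟨e, he⟩ := Set.nonempty_of_ncard_ne_zero (by rw [hn]; exact n.succ_ne_zero)
    induction e using Sym2.ind with | _ u v => ?_
    have huv : G.Adj u v := he
    have hdel := ih (hG.anti (deleteEdges_le {s(u, v)})) (by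
      rw [edgeSet_deleteEdges, Set.ncard_sdiff_singleton_of_mem he, hn, Nat.add_sub_cancel])
    have hlt := card_connectedComponent_lt_card_deleteEdges huv
      (isAcyclic_iff_forall_adj_isBridge.mp hG huv)
    omega

lemma card_le_mul_card_connectedComponent [Finite V] {k : ℕ}
    (h : ∀ c : G.ConnectedComponent, c.supp.ncard ≤ k) :
    Nat.card V ≤ k * Nat.card G.ConnectedComponent := by
  classical
  have := Fintype.ofFinite V
  have := Fintype.ofFinite G.ConnectedComponent
  simp only [Nat.card_eq_fintype_card, ← Finset.card_univ]
  refine Finset.card_le_mul_card_image_of_maps_to (f := G.connectedComponentMk)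
    (fun _ _ ↦ Finset.mem_univ _) k fun c _ ↦ ?_
  convert h c
  rw [Set.ncard_eq_toFinset_card']
  congr 1
  ext v
  simp [ConnectedComponent.mem_supp_iff]

lemma IsAcyclic.mul_ncard_edgeSet_add_card_le [Finite V] (hG : G.IsAcyclic) {k : ℕ}
    (h : ∀ c : G.ConnectedComponent, c.supp.ncard ≤ k) :
    k * G.edgeSet.ncard + Nat.card V ≤ k * Nat.card V := by
  have hforest := hG.ncard_edgeSet_add_card_connectedComponent_le
  have hsmall := card_le_mul_card_connectedComponent h
  nlinarith

lemma edgeSet_fromEdgeSet_of_subset {s : Set (Sym2 V)} (h : s ⊆ G.edgeSet) :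
    (fromEdgeSet s).edgeSet = s := by
  rw [edgeSet_fromEdgeSet, sdiff_eq_left]
  exact Set.disjoint_left.mpr fun _ hs ↦ G.not_isDiag_of_mem_edgeSet (h hs)

end SimpleGraph

instance : DecidableRel heawood.Adj := fun _ _ ↦ decidable_of_iff' _ (fromRel_adj _ _ _)

lemma heawood_isRegularOfDegree : heawood.IsRegularOfDegree 3 := by
  unfold IsRegularOfDegree
  decide

lemma heawood_ncard_edgeSet : heawood.edgeSet.ncard = 21 := by
  have hsum := heawood.sum_degrees_eq_twice_card_edges
  simp only [heawood_isRegularOfDegree.degree_eq, Finset.sum_const, Finset.card_univ,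
    Fintype.card_fin, smul_eq_mul] at hsum
  rw [← coe_edgeFinset, Set.ncard_coe_finset]
  omega

lemma ncard_le_ten_of_subset_heawood {S : Set (Sym2 (Fin 14))} (hS : S ⊆ heawood.edgeSet)
    (hacyc : (fromEdgeSet S).IsAcyclic)
    (hsmall : ∀ c : (fromEdgeSet S).ConnectedComponent, c.supp.ncard ≤ 4) :
    S.ncard ≤ 10 := by
  have h := hacyc.mul_ncard_edgeSet_add_card_le hsmall
  rw [edgeSet_fromEdgeSet_of_subset hS, Nat.card_fin] at h
  omega

/-- The Heawood graph cannot be decomposed into two linear forests all of whose path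
components have length at most 3 (i.e. at most 4 vertices). -/
theorem stmt14 : ¬ ∃ S : Set (Sym2 (Fin 14)), S ⊆ heawood.edgeSet ∧
    IsLinearForest (SimpleGraph.fromEdgeSet S) ∧
    IsLinearForest (SimpleGraph.fromEdgeSet (heawood.edgeSet \ S)) ∧
    (∀ c : (SimpleGraph.fromEdgeSet S).ConnectedComponent, c.supp.ncard ≤ 4) ∧
    (∀ c : (SimpleGraph.fromEdgeSet (heawood.edgeSet \ S)).ConnectedComponent,
      c.supp.ncard ≤ 4) := by
  rintro ⟨S, hS, ⟨hacyc, -⟩, ⟨hacyc', -⟩, hsmall, hsmall'⟩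
  have hcard := ncard_le_ten_of_subset_heawood hS hacyc hsmall
  have hcard' := ncard_le_ten_of_subset_heawood Set.sdiff_subset hacyc' hsmall'
  have hsplit := Set.ncard_sdiff_add_ncard_of_subset hS (Set.toFinite _)
  rw [heawood_ncard_edgeSet] at hsplit
  omega
end

section
/- Let G = C(n,p) be a cycle permutation graph with n odd. If G contains a good configuration, then G admits a 2-bisection. -/
/-!
Colour the outer vertex `u_j` black iff `j - (r + 1)` is even and the inner vertex `v_i` black
iff `i - (s + 1)` is odd. As `n` is odd, the colours alternate along both cycles except on the
edges `u_r u_{r+1}` (both black) and `v_s v_{s+1}` (both white), and the parity conditions make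
the matching edges `u_r v_w`, `u_{r+1} v_s`, `u_t v_{s+1}` at these four vertices bichromatic.
Hence every vertex has at most one neighbour of its own colour, so monochromatic components have
at most two vertices. The map `u_j ↦ v_{j - r + s}`, `v_i ↦ u_{i - s + r}` exchanges the two
colour classes, so they have equal size.
-/

open SimpleGraph

namespace Fin

variable {n : ℕ} [NeZero n]

theorem val_add_one_eq_mod (i : Fin n) : (i + 1).val = (i.val + 1) % n := by
  rw [val_add, val_one', Nat.add_mod_mod]

theorem val_neg_add_one (x : Fin n) : (-(x + 1)).val = n - 1 - x.val := by
  have := x.is_lt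
  rw [Fin.val_neg', val_add_one_eq_mod]
  rcases Nat.lt_or_ge (x.val + 1) n with hlt | hge
  · rw [Nat.mod_eq_of_lt hlt, Nat.mod_eq_of_lt (by omega)]
    omega
  · rw [show x.val + 1 = n by omega, Nat.mod_self, Nat.sub_zero, Nat.mod_self]
    omega

theorem add_one_eq_zero_of_even_val_iff (d : Fin n) (h : Even (d + 1).val ↔ Even d.val) :
    d + 1 = 0 := by
  have := d.is_lt
  rcases Nat.lt_or_ge (d.val + 1) n with hlt | hge
  · rw [val_add_one_eq_mod, Nat.mod_eq_of_lt hlt, Nat.even_add_one] at h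
    tauto
  · ext
    rw [val_add_one_eq_mod, show d.val + 1 = n by omega, Nat.mod_self, val_zero]

theorem even_val_sub_add_one_iff (hn : Odd n) (a b : Fin n) :
    Even (a - (b + 1)).val ↔ Even (b - a).val := by
  rw [show a - (b + 1) = -((b - a) + 1) by abel, val_neg_add_one]
  have := (b - a).is_lt
  rw [Nat.odd_iff] at hn
  simp only [Nat.even_iff]
  omega

theorem even_val_neg_one (hn : Odd n) : Even (-1 : Fin n).val := by
  have h := val_neg_add_one (0 : Fin n)
  rw [zero_add, val_zero, Nat.sub_zero] at h
  rw [h]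
  exact Nat.Odd.sub_odd hn odd_one

theorem eq_of_even_val_sub_iff {c i : Fin n} (h : Even (i - (c + 1)).val ↔ Even (i - c).val) :
    i = c := by
  have hic : i - (c + 1) + 1 = i - c := by abel
  rw [← sub_eq_zero, ← hic]
  exact add_one_eq_zero_of_even_val_iff _ (by rw [hic]; exact h.symm)

end Fin

namespace SimpleGraph

theorem ConnectedComponent.ncard_supp_le_two {V : Type*} {H : SimpleGraph V}
    (h : ∀ x y z, H.Adj x y → H.Adj x z → y = z) (c : H.ConnectedComponent) :
    c.supp.ncard ≤ 2 := by
  induction c using ConnectedComponent.ind with | _ v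
  have hnbr : (H.neighborSet v).Subsingleton := fun y hy z hz => h v y z hy hz
  -- a neighbour of a neighbour of `v` is `v` itself
  have hsupp : (H.connectedComponentMk v).supp ⊆ insert v (H.neighborSet v) := by
    intro x hx
    rw [ConnectedComponent.mem_supp_iff, ConnectedComponent.eq] at hx
    replace hx := (reachable_iff_reflTransGen v x).1 hx.symm
    induction hx with
    | refl => exact Set.mem_insert v _
    | tail _ hyz ih =>
      rcases ih with rfl | hvy
      · exact Set.mem_insert_of_mem _ hyz
      · exact Or.inl (h _ _ _ hyz hvy.symm)
  calc (H.connectedComponentMk v).supp.ncard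
      ≤ (insert v (H.neighborSet v)).ncard := Set.ncard_le_ncard hsupp (hnbr.finite.insert v)
    _ ≤ (H.neighborSet v).ncard + 1 := Set.ncard_insert_le _ _
    _ ≤ 2 := by
      have : (H.neighborSet v).ncard ≤ 1 := (Set.ncard_le_one hnbr.finite).2 hnbr
      omega

end SimpleGraph

theorem smallComponents_two_of_adj_eq {V : Type*} {G : SimpleGraph V} {s : Set V} (f : V → V)
    (h : ∀ x ∈ s, ∀ y ∈ s, G.Adj x y → y = f x) : SmallComponents G s 2 := fun c =>
  c.ncard_supp_le_two fun x y z hxy hxz =>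
    Subtype.ext ((h _ x.2 _ y.2 hxy).trans (h _ x.2 _ z.2 hxz).symm)

theorem Set.two_mul_ncard_eq_of_equiv {V : Type*} [Finite V] (e : V ≃ V) {s : Set V}
    (h : ∀ x, e x ∈ s ↔ x ∉ s) : 2 * s.ncard = Nat.card V := by
  have hcompl := Set.ncard_add_ncard_compl s
  rw [← show e ⁻¹' s = sᶜ from Set.ext h,
    Set.ncard_preimage_of_injective_subset_range e.injective (by simp)] at hcompl
  omega

section CyclePerm

variable {n : ℕ} {p : Equiv.Perm (Fin n)}

@[simp]
theorem cyclePerm_adj_inr_inl {i j : Fin n} :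
    (cyclePerm n p).Adj (.inr i) (.inl j) ↔ j = p i := by
  simp [cyclePerm]

@[simp]
theorem cyclePerm_adj_inl_inr {i j : Fin n} :
    (cyclePerm n p).Adj (.inl j) (.inr i) ↔ j = p i := by
  rw [SimpleGraph.adj_comm, cyclePerm_adj_inr_inl]

def alternatingSet (c d : Fin n) : Set (Fin n ⊕ Fin n) :=
  {x | Sum.elim (fun j => Even (j - c).val) (fun i => Odd (i - d).val) x}

@[simp]
theorem inl_mem_alternatingSet {c d j : Fin n} :
    .inl j ∈ alternatingSet c d ↔ Even (j - c).val := Iff.rfl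

@[simp]
theorem inr_mem_alternatingSet {c d i : Fin n} :
    .inr i ∈ alternatingSet c d ↔ Odd (i - d).val := Iff.rfl

variable [NeZero n]

@[simp]
theorem cyclePerm_adj_inl_inl {i j : Fin n} :
    (cyclePerm n p).Adj (.inl i) (.inl j) ↔ i ≠ j ∧ (j = i + 1 ∨ i = j + 1) := by
  simp [cyclePerm, Fin.ext_iff, Fin.val_add_one_eq_mod]

@[simp]
theorem cyclePerm_adj_inr_inr {i j : Fin n} :
    (cyclePerm n p).Adj (.inr i) (.inr j) ↔ i ≠ j ∧ (j = i + 1 ∨ i = j + 1) := by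
  simp [cyclePerm, Fin.ext_iff, Fin.val_add_one_eq_mod]

theorem two_mul_ncard_alternatingSet (c d : Fin n) :
    2 * (alternatingSet c d).ncard = Fintype.card (Fin n ⊕ Fin n) := by
  rw [← Nat.card_eq_fintype_card]
  refine Set.two_mul_ncard_eq_of_equiv
    ((Equiv.sumCongr (Equiv.addRight (d - c)) (Equiv.addRight (c - d))).trans
      (Equiv.sumComm _ _)) ?_
  rintro (j | i)
  · simp [Nat.not_even_iff_odd, show j + (d - c) - d = j - c by abel]
  · simp [show i + (c - d) - c = i - d by abel]

def monoPartner (p : Equiv.Perm (Fin n)) (r s : Fin n) : Fin n ⊕ Fin n → Fin n ⊕ Fin n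
  | .inl j => if j = r then .inl (r + 1) else if j = r + 1 then .inl r else .inr (p.symm j)
  | .inr i => if i = s then .inr (s + 1) else if i = s + 1 then .inr s else .inl (p i)

theorem eq_monoPartner_of_adj (hn : Odd n) {r s t w : Fin n}
    (h1 : p w = r) (h2 : p s = r + 1) (h3 : p (s + 1) = t)
    (he1 : Even (r - t).val) (he2 : Even (s - w).val) {x y : Fin n ⊕ Fin n}
    (hxy : (cyclePerm n p).Adj x y)
    (hcol : x ∈ alternatingSet (r + 1) (s + 1) ↔ y ∈ alternatingSet (r + 1) (s + 1)) :
    y = monoPartner p r s x := by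
  have hneg := Fin.even_val_neg_one hn
  have ht : Even (t - (r + 1)).val := (Fin.even_val_sub_add_one_iff hn t r).2 he1
  have hw : Even (w - (s + 1)).val := (Fin.even_val_sub_add_one_iff hn w s).2 he2
  rcases x with i | i <;> rcases y with j | j <;> simp only [cyclePerm_adj_inl_inl,
    cyclePerm_adj_inr_inr, cyclePerm_adj_inl_inr, cyclePerm_adj_inr_inl] at hxy
  · rcases hxy.2 with rfl | rfl
    · obtain rfl := Fin.eq_of_even_val_sub_iff (by simpa using hcol)
      simp [monoPartner]
    · obtain rfl := Fin.eq_of_even_val_sub_iff (by simpa using hcol.symm)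
      simp [monoPartner]
  · subst hxy
    simp only [monoPartner]
    split_ifs with hjr hjr1
    · obtain rfl : j = w := p.injective (hjr.trans h1.symm)
      simp [hjr, hneg, ← Nat.not_even_iff_odd, hw] at hcol
    · obtain rfl : j = s := p.injective (hjr1.trans h2.symm)
      simp [hjr1, hneg, ← Nat.not_even_iff_odd] at hcol
    · simp
  · subst hxy
    simp only [monoPartner]
    split_ifs with his his1
    · subst his
      simp [h2, hneg, ← Nat.not_even_iff_odd] at hcol
    · subst his1
      simp [h3, ht, ← Nat.not_even_iff_odd] at hcol
    · rfl
  · rcases hxy.2 with rfl | rfl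
    · obtain rfl := Fin.eq_of_even_val_sub_iff <| by
        simpa [← Nat.not_even_iff_odd, not_iff_not] using hcol
      simp [monoPartner]
    · obtain rfl := Fin.eq_of_even_val_sub_iff <| by
        simpa [← Nat.not_even_iff_odd, not_iff_not] using hcol.symm
      simp [monoPartner]

end CyclePerm

theorem stmt15_general (n : ℕ) [NeZero n] (hodd : Odd n) (p : Equiv.Perm (Fin n))
    (r s t w : Fin n)
    (h1 : p w = r) (h2 : p s = r + 1) (h3 : p (s + 1) = t)
    (he1 : Even ((r - t).val)) (he2 : Even ((s - w).val)) :
    ∃ B : Set (Fin n ⊕ Fin n), IsKBisection (cyclePerm n p) 2 B :=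
  ⟨alternatingSet (r + 1) (s + 1), two_mul_ncard_alternatingSet _ _,
    smallComponents_two_of_adj_eq (monoPartner p r s) fun _ hx _ hy hxy =>
      eq_monoPartner_of_adj hodd h1 h2 h3 he1 he2 hxy (iff_of_true hx hy),
    smallComponents_two_of_adj_eq (monoPartner p r s) fun _ hx _ hy hxy =>
      eq_monoPartner_of_adj hodd h1 h2 h3 he1 he2 hxy (iff_of_false hx hy)⟩

/-- If a cycle permutation graph `C(n,p)` with `n` odd contains a good configuration
`{a_r = u r, a_{r+1} = u (r+1), a = u t, b_s = v s, b_{s+1} = v (s+1), b = v w}`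
(with `a_r b`, `a_{r+1} b_s`, `a b_{s+1}` matching edges, and the path in `C₁` from `a` to
`a_r` avoiding `a_{r+1}`, and the path in `C₂` from `b` to `b_s` avoiding `b_{s+1}`,
both of even length), then it admits a 2-bisection. -/
theorem stmt15 (n : ℕ) [NeZero n] (hn : 4 ≤ n) (hodd : Odd n) (p : Equiv.Perm (Fin n))
    (r s t w : Fin n)
    (h1 : p w = r) (h2 : p s = r + 1) (h3 : p (s + 1) = t)
    (ht1 : t ≠ r) (ht2 : t ≠ r + 1) (hw1 : w ≠ s) (hw2 : w ≠ s + 1)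
    (he1 : Even ((r - t).val)) (he2 : Even ((s - w).val)) :
    ∃ B : Set (Fin n ⊕ Fin n), IsKBisection (cyclePerm n p) 2 B :=
  stmt15_general n hodd p r s t w h1 h2 h3 he1 he2
end

section
/- If a cubic graph G with |V(G)| ≡ 2 (mod 4) admits a Strong Wormald Colouring (in the mod-4-remainder-2 sense, with one uncoloured edge xy), then G admits a bisection whose two induced monochromatic subgraphs are isomorphic linear forests. -/
open SimpleGraph

/-! Colour the edges of `G - xy` black (`H₁`) and white (`H₂`). Away from `x` and `y` the black
and white degrees sum to 3 and are at most 2, so exactly one of them is 2; at `x` the white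
degree is 2 and at `y` the black degree is 2, so the same holds there. Let `B` be the set of
vertices of black degree 2. An edge of `G` inside `B` is neither white (every white edge has an
endpoint of white degree 2) nor `xy` (as `x ∉ B`), so `G[B]` is an induced subgraph of the black
linear forest, and symmetrically `G[Bᶜ]` of the white one. An isomorphism from the black to the
white forest preserves degrees, hence maps `B` onto `Bᶜ` and restricts to `G[B] ≃ G[Bᶜ]`. -/

namespace SimpleGraph

variable {V W : Type*}

theorem neighborSet_edge_left {x y : V} (h : x ≠ y) : (edge x y).neighborSet x = {y} := by
  ext v
  rw [mem_neighborSet, edge_adj, Set.mem_singleton_iff]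
  grind

theorem neighborSet_edge_of_ne {x y v : V} (hx : v ≠ x) (hy : v ≠ y) :
    (edge x y).neighborSet v = ∅ := by
  ext w
  simp [edge_adj, hx, hy]

theorem ncard_neighborSet_sup [Finite V] {H₁ H₂ : SimpleGraph V} (h : Disjoint H₁ H₂) (v : V) :
    ((H₁ ⊔ H₂).neighborSet v).ncard = (H₁.neighborSet v).ncard + (H₂.neighborSet v).ncard := by
  rw [neighborSet_sup]
  exact Set.ncard_union_eq
    (Set.disjoint_left.2 fun _ h₁ h₂ => h.le_bot (show (H₁ ⊓ H₂).Adj _ _ from ⟨h₁, h₂⟩))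

theorem Iso.ncard_neighborSet {G : SimpleGraph V} {G' : SimpleGraph W} (φ : G ≃g G') (v : V) :
    (G'.neighborSet (φ v)).ncard = (G.neighborSet v).ncard := by
  rw [← Nat.card_coe_set_eq, ← Nat.card_coe_set_eq]
  exact (Nat.card_congr (φ.mapNeighborSet v)).symm

end SimpleGraph

theorem IsLinearForest.of_embedding {V W : Type*} [Finite W] {H : SimpleGraph V}
    {K : SimpleGraph W} (f : H ↪g K) (hK : IsLinearForest K) : IsLinearForest H :=
  ⟨hK.1.embedding f, fun v =>
    (Set.ncard_le_ncard_of_injOn f (fun _ h => f.map_adj_iff.2 h) f.injective.injOn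
      (Set.toFinite _)).trans (hK.2 (f v))⟩

section Decomposition

variable {V : Type*} {G H₁ H₂ : SimpleGraph V} {x y : V}

theorem ncard_neighborSet_add_ncard_neighborSet [Finite V] (hxy : G.Adj x y)
    (hdisj : Disjoint H₁ H₂) (hsup : H₁ ⊔ H₂ = G \ edge x y) (v : V) :
    (H₁.neighborSet v).ncard + (H₂.neighborSet v).ncard + ((edge x y).neighborSet v).ncard =
      (G.neighborSet v).ncard := by
  have hedge : edge x y ≤ G := fun a b h => by
    obtain ⟨(⟨rfl, rfl⟩ | ⟨rfl, rfl⟩), -⟩ := (edge_adj _ _ _ _).1 h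
    exacts [hxy, hxy.symm]
  have hG : G = H₁ ⊔ H₂ ⊔ edge x y := by rw [hsup, sdiff_sup_cancel hedge]
  have hdisj' : Disjoint (H₁ ⊔ H₂) (edge x y) := hsup ▸ disjoint_sdiff_self_left
  conv_rhs => rw [hG, ncard_neighborSet_sup hdisj', ncard_neighborSet_sup hdisj]

theorem ncard_neighborSet_eq_two_iff [Finite V] (hG : ∀ v, (G.neighborSet v).ncard = 3)
    (hxy : G.Adj x y) (hdisj : Disjoint H₁ H₂) (hsup : H₁ ⊔ H₂ = G \ edge x y)
    (hH₁ : ∀ v, (H₁.neighborSet v).ncard ≤ 2) (hH₂ : ∀ v, (H₂.neighborSet v).ncard ≤ 2)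
    (hx : (H₂.neighborSet x).ncard = 2) (hy : (H₁.neighborSet y).ncard = 2) (v : V) :
    (H₁.neighborSet v).ncard = 2 ↔ (H₂.neighborSet v).ncard ≠ 2 := by
  have hsum := ncard_neighborSet_add_ncard_neighborSet hxy hdisj hsup v
  rw [hG v] at hsum
  have := hH₁ v
  have := hH₂ v
  obtain rfl | hvx := eq_or_ne v x
  · rw [neighborSet_edge_left hxy.ne, Set.ncard_singleton] at hsum
    omega
  obtain rfl | hvy := eq_or_ne v y
  · rw [edge_comm, neighborSet_edge_left hxy.ne.symm, Set.ncard_singleton] at hsum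
    omega
  rw [neighborSet_edge_of_ne hvx hvy, Set.ncard_empty] at hsum
  omega

theorem induce_eq_induce_of_ncard_neighborSet_ne_two (hsup : H₁ ⊔ H₂ = G \ edge x y)
    {s : Set V} (hs : ∀ v ∈ s, (H₂.neighborSet v).ncard ≠ 2)
    (hH₂ : ∀ u v, H₂.Adj u v → (H₂.neighborSet u).ncard = 2 ∨ (H₂.neighborSet v).ncard = 2)
    (hx : (H₂.neighborSet x).ncard = 2) :
    G.induce s = H₁.induce s := by
  ext ⟨a, ha⟩ ⟨b, hb⟩
  refine ⟨fun h => ?_, fun h => (hsup ▸ le_sup_left : H₁ ≤ G \ edge x y).trans sdiff_le h⟩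
  rcases (show G ≤ H₁ ⊔ H₂ ⊔ edge x y from hsup ▸ le_sdiff_sup) h with (h₁ | h₂) | hab
  · exact h₁
  · exact absurd (hH₂ a b h₂) (not_or.2 ⟨hs a ha, hs b hb⟩)
  · obtain ⟨(⟨rfl, rfl⟩ | ⟨rfl, rfl⟩), -⟩ := (edge_adj _ _ _ _).1 hab
    exacts [(hs a ha hx).elim, (hs b hb hx).elim]

end Decomposition

theorem stmt18_general {V : Type*} [Fintype V] (G : SimpleGraph V) [DecidableRel G.Adj]
    (hcubic : G.IsRegularOfDegree 3)
    (x y : V) (hxy : G.Adj x y)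
    (S : Set (Sym2 V)) (hS : S ⊆ G.edgeSet \ {s(x, y)})
    (hlfB : IsLinearForest (SimpleGraph.fromEdgeSet S))
    (hlfW : IsLinearForest (SimpleGraph.fromEdgeSet ((G.edgeSet \ {s(x, y)}) \ S)))
    (hiso : Nonempty ((SimpleGraph.fromEdgeSet S) ≃g
      (SimpleGraph.fromEdgeSet ((G.edgeSet \ {s(x, y)}) \ S))))
    (hlenB : ∀ u v : V, (SimpleGraph.fromEdgeSet S).Adj u v →
      ((SimpleGraph.fromEdgeSet S).neighborSet u).ncard = 2 ∨
      ((SimpleGraph.fromEdgeSet S).neighborSet v).ncard = 2)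
    (hlenW : ∀ u v : V, (SimpleGraph.fromEdgeSet ((G.edgeSet \ {s(x, y)}) \ S)).Adj u v →
      ((SimpleGraph.fromEdgeSet ((G.edgeSet \ {s(x, y)}) \ S)).neighborSet u).ncard = 2 ∨
      ((SimpleGraph.fromEdgeSet ((G.edgeSet \ {s(x, y)}) \ S)).neighborSet v).ncard = 2)
    (hx : ((SimpleGraph.fromEdgeSet ((G.edgeSet \ {s(x, y)}) \ S)).neighborSet x).ncard = 2)
    (hy : ((SimpleGraph.fromEdgeSet S).neighborSet y).ncard = 2) :
    ∃ B : Set V, 2 * B.ncard = Fintype.card V ∧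
      Nonempty (G.induce B ≃g G.induce Bᶜ) ∧
      IsLinearForest (G.induce B) ∧ IsLinearForest (G.induce Bᶜ) := by
  obtain ⟨φ⟩ := hiso
  set H₁ := fromEdgeSet S
  set H₂ := fromEdgeSet ((G.edgeSet \ {s(x, y)}) \ S)
  have hdisj : Disjoint H₁ H₂ := by
    rw [fromEdgeSet_disjoint, edgeSet_fromEdgeSet]
    exact Set.disjoint_sdiff_right.mono_right Set.sdiff_subset
  have hsup : H₁ ⊔ H₂ = G \ edge x y := by
    rw [← fromEdgeSet_union, Set.union_sdiff_cancel hS, fromEdgeSet_sdiff, fromEdgeSet_edgeSet]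
    rfl
  have h3 : ∀ v, (G.neighborSet v).ncard = 3 := fun v => by
    rw [← Nat.card_coe_set_eq, Nat.card_eq_fintype_card, card_neighborSet_eq_degree, hcubic v]
  have hB := ncard_neighborSet_eq_two_iff h3 hxy hdisj hsup hlfB.2 hlfW.2 hx hy
  set B := {v | (H₁.neighborSet v).ncard = 2}
  have hbij : Set.BijOn φ B Bᶜ := by
    convert φ.bijective.bijOn_preimage
    ext v
    simp only [Set.mem_preimage, Set.mem_compl_iff, Set.mem_ofPred_eq, B, hB (φ v),
      φ.ncard_neighborSet, not_not]
  have hGB : G.induce B = H₁.induce B :=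
    induce_eq_induce_of_ncard_neighborSet_ne_two hsup (fun v hv => (hB v).1 hv) hlenW hx
  have hGW : G.induce Bᶜ = H₂.induce Bᶜ :=
    induce_eq_induce_of_ncard_neighborSet_ne_two (by rw [sup_comm, edge_comm, hsup])
      (fun _ hv => hv) hlenB hy
  refine ⟨B, ?_, ?_, ?_, ?_⟩
  · have := Set.ncard_add_ncard_compl B
    rw [← hbij.ncard_eq, Nat.card_eq_fintype_card] at this
    omega
  · rw [hGB, hGW]
    exact ⟨φ.induce hbij⟩
  · rw [hGB]
    exact hlfB.of_embedding (Embedding.induce B)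
  · rw [hGW]
    exact hlfW.of_embedding (Embedding.induce Bᶜ)

/-- If a cubic graph `G` of order `2 (mod 4)` admits a Strong Wormald Colouring — an edge
`xy` together with a 2-colouring of the remaining edges (black `S`, white the rest) whose
monochromatic subgraphs are isomorphic linear forests with all paths of length at least 2,
with `x` incident to two white edges and `y` incident to two black edges — then `G` admits
a bisection whose two induced monochromatic subgraphs are isomorphic linear forests. -/
theorem stmt18 {V : Type*} [Fintype V] (G : SimpleGraph V) [DecidableRel G.Adj]
    (hcubic : G.IsRegularOfDegree 3) (hmod : Fintype.card V % 4 = 2)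
    (x y : V) (hxy : G.Adj x y)
    (S : Set (Sym2 V)) (hS : S ⊆ G.edgeSet \ {s(x, y)})
    (hlfB : IsLinearForest (SimpleGraph.fromEdgeSet S))
    (hlfW : IsLinearForest (SimpleGraph.fromEdgeSet ((G.edgeSet \ {s(x, y)}) \ S)))
    (hiso : Nonempty ((SimpleGraph.fromEdgeSet S) ≃g
      (SimpleGraph.fromEdgeSet ((G.edgeSet \ {s(x, y)}) \ S))))
    (hlenB : ∀ u v : V, (SimpleGraph.fromEdgeSet S).Adj u v →
      ((SimpleGraph.fromEdgeSet S).neighborSet u).ncard = 2 ∨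
      ((SimpleGraph.fromEdgeSet S).neighborSet v).ncard = 2)
    (hlenW : ∀ u v : V, (SimpleGraph.fromEdgeSet ((G.edgeSet \ {s(x, y)}) \ S)).Adj u v →
      ((SimpleGraph.fromEdgeSet ((G.edgeSet \ {s(x, y)}) \ S)).neighborSet u).ncard = 2 ∨
      ((SimpleGraph.fromEdgeSet ((G.edgeSet \ {s(x, y)}) \ S)).neighborSet v).ncard = 2)
    (hx : ((SimpleGraph.fromEdgeSet ((G.edgeSet \ {s(x, y)}) \ S)).neighborSet x).ncard = 2)
    (hy : ((SimpleGraph.fromEdgeSet S).neighborSet y).ncard = 2) :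
    ∃ B : Set V, 2 * B.ncard = Fintype.card V ∧
      Nonempty (G.induce B ≃g G.induce Bᶜ) ∧
      IsLinearForest (G.induce B) ∧ IsLinearForest (G.induce Bᶜ) :=
  stmt18_general G hcubic x y hxy S hS hlfB hlfW hiso hlenB hlenW hx hy
end
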